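/- arXiv:1702.00431 — 11 statements merged into one kernel-verified Lean document; each statement's English description precedes it below -/
import Mathlib

section
/- Let n be a positive integer and let b_1, …, b_n be positive integers such that at least one of them is greater than 1. Let t_1 ≤ t_2 ≤ … ≤ t_n and t be positive real numbers such that t ≥ (1/2)·(t_1 + … + t_{n-1}) + t_n. Then t·(b_1·…·b_n) ≥ t_1·b_1 + t_2·b_2 + … + t_n·b_n. -/
/-!
If `b j ≥ 2`, every other factor satisfies `2 b i ≤ b i b j ≤ ∏ b`, while `b j ≤ ∏ b`. Hence
`∑ tᵢ bᵢ ≤ (∑ tᵢ + t_j) · ∏ b / 2`, and `∑ tᵢ + t_j ≤ ∑_{i<n} tᵢ + 2 tₙ ≤ 2 t` by monotonicity.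
-/

open Finset

section ProdBounds

variable {ι R : Type*} [CommMonoidWithZero R] [PartialOrder R] [ZeroLEOneClass R] [PosMulMono R]
  {s : Finset ι} {f : ι → R}

theorem Finset.le_prod_of_one_le {j : ι} (hf : ∀ k ∈ s, 1 ≤ f k) (hj : j ∈ s) :
    f j ≤ ∏ k ∈ s, f k := by
  rw [← prod_singleton f j]
  exact prod_le_prod_of_subset_of_one_le (singleton_subset_iff.2 hj)
    (fun k hk => zero_le_one.trans (hf k (mem_singleton.1 hk ▸ hj))) (fun k hk _ => hf k hk)

theorem Finset.mul_le_prod_of_one_le {i j : ι} (hf : ∀ k ∈ s, 1 ≤ f k) (hi : i ∈ s) (hj : j ∈ s)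
    (hij : i ≠ j) : f i * f j ≤ ∏ k ∈ s, f k := by
  classical
  have hsub : ({i, j} : Finset ι) ⊆ s := insert_subset hi (singleton_subset_iff.2 hj)
  rw [← prod_pair hij]
  exact prod_le_prod_of_subset_of_one_le hsub
    (fun k hk => zero_le_one.trans (hf k (hsub hk))) (fun k hk _ => hf k hk)

end ProdBounds

theorem Finset.sum_mul_le_of_le_half_of_ne {ι : Type*} {s : Finset ι} {w x : ι → ℝ} {B : ℝ}
    {j : ι} (hj : j ∈ s) (hw : ∀ i ∈ s, 0 ≤ w i) (hx : ∀ i ∈ s, i ≠ j → x i ≤ B / 2)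
    (hxj : x j ≤ B) : ∑ i ∈ s, w i * x i ≤ (∑ i ∈ s, w i + w j) * (B / 2) := by
  classical
  have hoff : ∑ i ∈ s.erase j, w i * x i ≤ (∑ i ∈ s.erase j, w i) * (B / 2) := by
    rw [sum_mul]
    exact sum_le_sum fun i hi =>
      mul_le_mul_of_nonneg_left (hx i (mem_of_mem_erase hi) (ne_of_mem_erase hi))
        (hw i (mem_of_mem_erase hi))
  have hon : w j * x j ≤ w j * B := mul_le_mul_of_nonneg_left hxj (hw j hj)
  rw [← add_sum_erase s _ hj, ← add_sum_erase s w hj]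
  linarith

theorem stmt0_general (n : ℕ) (b : Fin (n + 1) → ℕ) (hb : ∀ i, 0 < b i)
    (hb1 : ∃ i, 1 < b i)
    (t : Fin (n + 1) → ℝ) (ht : ∀ i, 0 < t i) (hmono : Monotone t)
    (T : ℝ)
    (hineq : (1 / 2) * (∑ i : Fin n, t i.castSucc) + t (Fin.last n) ≤ T) :
    ∑ i : Fin (n + 1), t i * (b i : ℝ) ≤ T * ∏ i : Fin (n + 1), (b i : ℝ) := by
  obtain ⟨j, hj⟩ := hb1
  set B := ∏ i : Fin (n + 1), (b i : ℝ)
  have hb_one : ∀ i ∈ univ, (1 : ℝ) ≤ b i := fun i _ => by exact_mod_cast hb i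
  have hB : 0 ≤ B := prod_nonneg fun i hi => zero_le_one.trans (hb_one i hi)
  have hbj : (2 : ℝ) ≤ b j := by exact_mod_cast hj
  have hoff : ∀ i ∈ univ, i ≠ j → (b i : ℝ) ≤ B / 2 := fun i hi hij => by
    have := mul_le_prod_of_one_le hb_one hi (mem_univ j) hij
    nlinarith [hb_one i hi]
  have hweights : ∑ i, t i + t j ≤ 2 * T := by
    have := hmono (Fin.le_last j)
    rw [Fin.sum_univ_castSucc]
    linarith
  calc ∑ i, t i * (b i : ℝ)
      ≤ (∑ i, t i + t j) * (B / 2) :=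
        sum_mul_le_of_le_half_of_ne (mem_univ j) (fun i _ => (ht i).le) hoff
          (le_prod_of_one_le hb_one (mem_univ j))
    _ ≤ 2 * T * (B / 2) := by gcongr
    _ = T * B := by ring

/-- Let `b₁, …, bₙ` be positive integers, at least one of them greater
than `1`. Let `t₁ ≤ … ≤ tₙ` and `t` be positive reals with
`t ≥ ½(t₁ + … + t_{n-1}) + tₙ`. Then `t·(b₁⋯bₙ) ≥ t₁b₁ + … + tₙbₙ`.
Here the `n` indices are modelled by `Fin (n + 1)` (so `n + 1 ≥ 1` indices). -/
theorem stmt0 (n : ℕ) (b : Fin (n + 1) → ℕ) (hb : ∀ i, 0 < b i)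
    (hb1 : ∃ i, 1 < b i)
    (t : Fin (n + 1) → ℝ) (ht : ∀ i, 0 < t i) (hmono : Monotone t)
    (T : ℝ) (hT : 0 < T)
    (hineq : (1 / 2) * (∑ i : Fin n, t i.castSucc) + t (Fin.last n) ≤ T) :
    ∑ i : Fin (n + 1), t i * (b i : ℝ) ≤ T * ∏ i : Fin (n + 1), (b i : ℝ) :=
  stmt0_general n b hb hb1 t ht hmono T hineq
end

section
/- Let α : V → ℕ be a WP-weight system on a set V with exactly three elements, such that the associated coprimality graph is connected and no vertex of V is weak. Then lcm_{v ∈ V} α(v) ≥ (∑_{v ∈ V} α(v)) − 1; moreover lcm_{v ∈ V} α(v) ≥ ∑_{v ∈ V} α(v) unless the multiset of values {α(v) : v ∈ V} equals {6, 10, 15}. -/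
/-!
Non-weakness makes the weights an antichain for divisibility, so if `a < b < c` are the weights
and `L` their lcm, the cofactors `x = L / a > y = L / b > z = L / c` are at least `2`.
If `a + b + c > L` then `1/x + 1/y + 1/z > 1`, which forces `(z, y, x) = (2, 3, 4)` or `(2, 3, 5)`.
The first gives `a ∣ c`; the second gives `30 ∣ L` with `L / 30` a common divisor of the
weights, hence `L = 30` and the weights are `6, 10, 15`, where `lcm = Σ - 1`.
-/

/-- A WP-weight system: every weight is at least `2`, and any three weights at
distinct vertices are (setwise) coprime. -/
def WPSystem {V : Type} (α : V → ℕ) : Prop :=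
  (∀ v, 2 ≤ α v) ∧
    ∀ v₁ v₂ v₃ : V, v₁ ≠ v₂ → v₁ ≠ v₃ → v₂ ≠ v₃ →
      Nat.gcd (Nat.gcd (α v₁) (α v₂)) (α v₃) = 1

/-- The coprimality graph of a weight system: distinct vertices are adjacent iff
their weights are not coprime. -/
def coprimeGraph {V : Type} (α : V → ℕ) : SimpleGraph V where
  Adj v w := v ≠ w ∧ 1 < Nat.gcd (α v) (α w)
  symm := ⟨fun v w h => ⟨h.1.symm, by rw [Nat.gcd_comm]; exact h.2⟩⟩
  loopless := ⟨fun v h => h.1 rfl⟩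

/-- A vertex `v` is weak if it is adjacent to some vertex `w` with `α v ∣ α w`. -/
def IsWeak {V : Type} (α : V → ℕ) (v : V) : Prop :=
  ∃ w, w ≠ v ∧ 1 < Nat.gcd (α v) (α w) ∧ α v ∣ α w

theorem eq_two_three_of_mul_lt_add {x y z : ℕ} (hz : 2 ≤ z) (hzy : z < y) (hyx : y < x)
    (h : x * y * z < x * y + y * z + z * x) : z = 2 ∧ y = 3 ∧ x < 6 := by
  have hz2 : z = 2 := by
    by_contra hne
    have h3 : 3 ≤ z := by omega
    nlinarith [Nat.mul_le_mul_left (x * y) h3]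
  subst hz2
  have hy3 : y = 3 := by nlinarith
  subst hy3
  exact ⟨rfl, rfl, by omega⟩

theorem sum_le_lcm_or_eq_of_lt {a b c : ℕ} (ha : 0 < a) (hab : a < b) (hbc : b < c)
    (hac : ¬ a ∣ c) (hgcd : Nat.gcd a (Nat.gcd b c) = 1) :
    a + b + c ≤ Nat.lcm a (Nat.lcm b c) ∨ (a = 6 ∧ b = 10 ∧ c = 15) := by
  set L := Nat.lcm a (Nat.lcm b c)
  obtain ⟨x, hx⟩ : a ∣ L := Nat.dvd_lcm_left _ _
  obtain ⟨y, hy⟩ : b ∣ L := (Nat.dvd_lcm_left b c).trans (Nat.dvd_lcm_right _ _)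
  obtain ⟨z, hz⟩ : c ∣ L := (Nat.dvd_lcm_right b c).trans (Nat.dvd_lcm_right _ _)
  have hL : 0 < L := Nat.lcm_pos ha (Nat.lcm_pos (by omega) (by omega))
  rcases le_or_gt (a + b + c) L with hle | hlt
  · exact Or.inl hle
  right
  have hz2 : 2 ≤ z := by
    have hz0 : z ≠ 0 := by rintro rfl; omega
    have hz1 : z ≠ 1 := by rintro rfl; exact hac ⟨x, by omega⟩
    omega
  have hzy : z < y := by nlinarith
  have hyx : y < x := by nlinarith
  have hfrac : x * y * z < x * y + y * z + z * x := by
    have : L * (x * y * z) < L * (x * y + y * z + z * x) :=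
      calc L * (x * y * z) < (a + b + c) * (x * y * z) := by
            have : 0 < x * y * z := Nat.mul_pos (Nat.mul_pos (by omega) (by omega)) (by omega)
            exact Nat.mul_lt_mul_of_pos_right hlt this
        _ = (a * x) * (y * z) + (b * y) * (z * x) + (c * z) * (x * y) := by ring
        _ = L * (x * y + y * z + z * x) := by rw [← hx, ← hy, ← hz]; ring
    exact Nat.lt_of_mul_lt_mul_left this
  obtain ⟨rfl, rfl, hx6⟩ := eq_two_three_of_mul_lt_add hz2 hzy hyx hfrac
  obtain rfl | rfl : x = 4 ∨ x = 5 := by omega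
  · exact absurd ⟨2, by omega⟩ hac
  · obtain ⟨k, rfl⟩ : 6 ∣ a := by omega
    have hk : k = 1 := Nat.dvd_one.mp <| hgcd ▸ Nat.dvd_gcd (dvd_mul_left k 6)
      (Nat.dvd_gcd ⟨10, by omega⟩ ⟨15, by omega⟩)
    omega

theorem Finset.sum_le_lcm_or_eq_of_isAntichain {T : Finset ℕ} (hT : T.card = 3)
    (hanti : IsAntichain (· ∣ ·) (T : Set ℕ)) (hgcd : T.gcd id = 1) :
    T.sum id ≤ T.lcm id ∨ T = {6, 10, 15} := by
  obtain ⟨a, b, c, hab, hac, hbc, hT⟩ := Finset.card_eq_three.mp hT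
  wlog h1 : a < b generalizing a b c
  · exact this b a c hab.symm hbc hac (by rw [hT, Finset.insert_comm]) (by omega)
  wlog h2 : b < c generalizing a b c
  · rcases lt_or_gt_of_ne hac with h | h
    · exact this a c b hac hab hbc.symm (by rw [hT, Finset.pair_comm]) h (by omega)
    · exact this c a b hac.symm hbc.symm hab
        (by rw [hT, Finset.insert_comm c a, Finset.pair_comm c b]) h h1
  subst hT
  have ha : 0 < a := Nat.pos_of_ne_zero fun h =>
    hanti (by simp) (by simp) hab.symm (h ▸ dvd_zero b)
  have hac' : ¬ a ∣ c := hanti (by simp) (by simp) hac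
  simp only [Finset.gcd_insert, Finset.gcd_singleton, id, normalize_eq, gcd_eq_nat_gcd] at hgcd
  rw [Finset.sum_insert (by simp [hab, hac]), Finset.sum_insert (by simp [hbc]),
    Finset.sum_singleton, Finset.lcm_insert, Finset.lcm_insert, Finset.lcm_singleton]
  simp only [id, normalize_eq, lcm_eq_nat_lcm, ← add_assoc]
  rcases sum_le_lcm_or_eq_of_lt ha h1 h2 hac' hgcd with h | ⟨rfl, rfl, rfl⟩
  · exact Or.inl h
  · exact Or.inr rfl

theorem not_dvd_of_not_isWeak {V : Type} {α : V → ℕ} {v w : V} (hv : 2 ≤ α v)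
    (hweak : ¬ IsWeak α v) (hwv : w ≠ v) : ¬ α v ∣ α w := fun hdvd =>
  hweak ⟨w, hwv, by rw [Nat.gcd_eq_left hdvd]; omega, hdvd⟩

theorem WPSystem.gcd_univ_eq_one {V : Type} [Fintype V] {α : V → ℕ} (hWP : WPSystem α)
    (hcard : 2 < Fintype.card V) : Finset.univ.gcd α = 1 := by
  obtain ⟨u, v, w, huv, huw, hvw⟩ := Fintype.two_lt_card_iff.mp hcard
  rw [← Nat.dvd_one, ← hWP.2 u v w huv huw hvw]
  exact Nat.dvd_gcd (Nat.dvd_gcd (Finset.gcd_dvd (Finset.mem_univ u))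
    (Finset.gcd_dvd (Finset.mem_univ v))) (Finset.gcd_dvd (Finset.mem_univ w))

theorem stmt3_general {V : Type} [Fintype V] (α : V → ℕ)
    (hcard : Fintype.card V = 3)
    (hWP : WPSystem α)
    (hweak : ∀ v : V, ¬ IsWeak α v) :
    (∑ v : V, α v) - 1 ≤ Finset.univ.lcm α ∧
      (Finset.univ.val.map α ≠ ({6, 10, 15} : Multiset ℕ) →
        ∑ v : V, α v ≤ Finset.univ.lcm α) := by
  have hdvd (v w : V) (hvw : v ≠ w) : ¬ α v ∣ α w :=
    not_dvd_of_not_isWeak (hWP.1 v) (hweak v) hvw.symm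
  have hinj : Function.Injective α := fun v w h =>
    by_contra fun hvw => hdvd v w hvw (h ▸ dvd_rfl)
  have hanti : IsAntichain (· ∣ ·) ((Finset.univ.image α : Finset ℕ) : Set ℕ) := by
    rw [Finset.coe_image, Finset.coe_univ, Set.image_univ]
    rintro _ ⟨v, rfl⟩ _ ⟨w, rfl⟩ hne
    exact hdvd v w (ne_of_apply_ne α hne)
  have hgcd : (Finset.univ.image α).gcd id = 1 := by
    rw [Finset.gcd_image]; exact hWP.gcd_univ_eq_one (by omega)
  have hsum : ∑ v, α v = (Finset.univ.image α).sum id :=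
    (Finset.sum_image (f := id) hinj.injOn).symm
  have hlcm : Finset.univ.lcm α = (Finset.univ.image α).lcm id :=
    (Finset.lcm_image (f := id) _).symm
  rw [hsum, hlcm, ← Finset.image_val_of_injOn hinj.injOn]
  rcases Finset.sum_le_lcm_or_eq_of_isAntichain (by rw [Finset.card_image_of_injective _ hinj,
    Finset.card_univ, hcard]) hanti hgcd with h | h
  · exact ⟨by omega, fun _ => h⟩
  · rw [h]; decide

/-- a WP-weight system on a three-element set, with connected
coprimality graph and no weak vertex, satisfies `lcm ≥ Σ − 1`; moreover
`lcm ≥ Σ` unless the multiset of weights is `{6, 10, 15}`. -/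
theorem stmt3 {V : Type} [Fintype V] [DecidableEq V] (α : V → ℕ)
    (hcard : Fintype.card V = 3)
    (hWP : WPSystem α)
    (hconn : (coprimeGraph α).Connected)
    (hweak : ∀ v : V, ¬ IsWeak α v) :
    (∑ v : V, α v) - 1 ≤ Finset.univ.lcm α ∧
      (Finset.univ.val.map α ≠ ({6, 10, 15} : Multiset ℕ) →
        ∑ v : V, α v ≤ Finset.univ.lcm α) :=
  stmt3_general α hcard hWP hweak
end

section
/- Let α : V → ℕ be a WP-weight system on a finite set V with at least 4 elements, such that the associated coprimality graph is connected, no vertex of V is weak, and every vertex is incident to at least two edges of the coprimality graph. Then lcm_{v ∈ V} α(v) ≥ ∑_{v ∈ V} α(v). -/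
/-!
Let `m` be the number of edges of the coprimality graph and `L` the lcm. As no prime divides three
weights, the gcds `d_e` of the endpoints of distinct edges `e` are pairwise coprime, and `d_e` is
coprime to `α v` whenever `v ∉ e`. So `α v * ∏_{v ∉ e} d_e` divides `L`, and as every `d_e ≥ 2`,
`α v * 2 ^ (m - deg v) ≤ L`. Summing over `v`, it remains to show `∑ 2 ^ deg v ≤ 2 ^ m`. This is
a convexity estimate: the degrees sum to `2 m` and lie in `[2, m - 2]`, since with at least four
vertices of degree at least two every vertex misses at least two edges.
-/

open Finset

theorem Nat.prod_dvd_of_pairwise_coprime {ι : Type*} {s : Finset ι} {f : ι → ℕ} {n : ℕ}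
    (hs : (s : Set ι).Pairwise (Function.onFun Nat.Coprime f)) (hdvd : ∀ i ∈ s, f i ∣ n) :
    ∏ i ∈ s, f i ∣ n := by
  exact_mod_cast Finset.prod_dvd_of_coprime (s := fun i => (f i : ℤ))
    (hs.mono' fun _ _ h => Nat.isCoprime_iff_coprime.mpr h)
    fun i hi => Int.natCast_dvd_natCast.mpr (hdvd i hi)

theorem two_pow_add_two_pow_le {p q r : ℕ} (hp : p ≤ r) (hq : q ≤ r) (hr : r ≤ p + q) :
    2 ^ p + 2 ^ q ≤ 2 ^ r + 2 ^ (p + q - r) := by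
  obtain ⟨s, rfl⟩ := Nat.exists_eq_add_of_le hp
  obtain ⟨t, rfl⟩ := Nat.exists_eq_add_of_le (show s ≤ q by omega)
  have ht : (2 : ℕ) ^ t ≤ 2 ^ p := Nat.pow_le_pow_right two_pos (by omega)
  rw [show p + (s + t) - (p + s) = t by omega, pow_add, pow_add]
  nlinarith [Nat.one_le_two_pow (n := s)]

theorem two_pow_add_capped_le {x S C : ℕ} (hx : x ≤ C) :
    2 ^ x + 2 ^ min S C + 2 ^ (S - C) ≤ 2 ^ min (x + S) C + 2 ^ (x + S - C) + 1 := by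
  rcases le_or_gt S C with hSC | hCS
  · have h := two_pow_add_two_pow_le (p := x) (q := S) (r := min (x + S) C)
      (by omega) (by omega) (by omega)
    rw [show x + S - min (x + S) C = x + S - C by omega] at h
    rw [min_eq_left hSC, Nat.sub_eq_zero_of_le hSC]
    omega
  · have h := two_pow_add_two_pow_le (p := x) (q := S - C) (r := x + (S - C))
      (by omega) (by omega) le_rfl
    rw [Nat.sub_self] at h
    rw [min_eq_right hCS.le, min_eq_right (by omega), show x + S - C = x + (S - C) by omega]
    omega

/-- The extremal case of convexity of `2 ^ ·` under the cap `C`: one exponent at the cap, one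
carrying the rest of the sum, all others `0`. -/
theorem sum_two_pow_add_two_le {ι : Type*} (s : Finset ι) (e : ι → ℕ) {C : ℕ}
    (he : ∀ i ∈ s, e i ≤ C) :
    ∑ i ∈ s, 2 ^ e i + 2 ≤ 2 ^ min (∑ i ∈ s, e i) C + 2 ^ (∑ i ∈ s, e i - C) + #s := by
  induction s using Finset.cons_induction with
  | empty => simp
  | cons a s ha ih =>
    rw [sum_cons, sum_cons, card_cons]
    have := ih fun i hi => he i (mem_cons_of_mem hi)
    have := two_pow_add_capped_le (S := ∑ i ∈ s, e i) (he a (mem_cons_self a s))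
    omega

theorem sum_two_pow_le_two_pow_of_sum_eq {V : Type*} [Fintype V] (d : V → ℕ) {m : ℕ}
    (hV : 4 ≤ Fintype.card V) (hsum : ∑ v, d v = 2 * m) (hlo : ∀ v, 2 ≤ d v)
    (hhi : ∀ v, d v + 2 ≤ m) :
    ∑ v, 2 ^ d v ≤ 2 ^ m := by
  choose e hd using fun v => Nat.exists_eq_add_of_le' (hlo v)
  have hS : ∑ v, e v + 2 * Fintype.card V = 2 * m := by
    simp only [← hsum, hd, sum_add_distrib, sum_const, card_univ, smul_eq_mul, mul_comm]
  have hpow : ∑ v, 2 ^ d v = 4 * ∑ v, 2 ^ e v := by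
    simp only [hd, pow_add, mul_sum]; norm_num [mul_comm]
  obtain ⟨k, rfl⟩ : ∃ k, m = k + 4 := ⟨m - 4, by omega⟩
  have hcap := sum_two_pow_add_two_le univ e (C := k) fun v _ => by
    have := hhi v; have := hd v; omega
  have hmin : 2 ^ min (∑ v, e v) k ≤ 2 ^ k := Nat.pow_le_pow_right two_pos (min_le_right _ _)
  have hexc : 2 ^ (∑ v, e v - k) ≤ 2 ^ k := Nat.pow_le_pow_right two_pos (by omega)
  have hlin : k + 2 ≤ 2 * 2 ^ k := by
    have := Nat.lt_two_pow_self (n := k); have := Nat.one_le_two_pow (n := k); omega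
  rw [card_univ] at hcap
  rw [hpow, pow_add]
  omega

namespace SimpleGraph

variable {V : Type*} [Fintype V] (G : SimpleGraph V) [DecidableRel G.Adj]

theorem degree_add_card_filter_notMem_edgeFinset [DecidableEq V] (v : V) :
    G.degree v + #{e ∈ G.edgeFinset | v ∉ e} = #G.edgeFinset := by
  rw [← card_incidenceFinset_eq_degree, incidenceFinset_eq_filter,
    card_filter_add_card_filter_not]

theorem exists_adj_ne_of_two_le_degree {w : V} (hw : 2 ≤ G.degree w) (v : V) :
    ∃ w', G.Adj w w' ∧ w' ≠ v := by
  obtain ⟨w', hw', hne⟩ :=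
    exists_mem_ne (s := G.neighborFinset w) (by rw [card_neighborFinset_eq_degree]; omega) v
  exact ⟨w', (G.mem_neighborFinset w w').mp hw', hne⟩

theorem two_le_card_filter_notMem_edgeFinset [DecidableEq V] (hV : 4 ≤ Fintype.card V)
    (hδ : ∀ v, 2 ≤ G.degree v) (v : V) : 2 ≤ #{e ∈ G.edgeFinset | v ∉ e} := by
  obtain ⟨w, hwv⟩ := Fintype.exists_ne_of_one_lt_card (by omega) v
  obtain ⟨w', hww', hw'v⟩ := G.exists_adj_ne_of_two_le_degree (hδ w) v
  obtain ⟨u, -, hu⟩ := exists_mem_notMem_of_card_lt_card (s := {v, w, w'}) (t := univ)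
    ((card_le_three).trans_lt (by rw [card_univ]; omega))
  simp only [mem_insert, mem_singleton, not_or] at hu
  obtain ⟨u', huu', hu'v⟩ := G.exists_adj_ne_of_two_le_degree (hδ u) v
  refine one_lt_card.mpr ⟨s(w, w'), ?_, s(u, u'), ?_, ?_⟩
  · simp [hww', hwv.symm, hw'v.symm]
  · simp [huu', Ne.symm hu.1, hu'v.symm]
  · intro h
    have : u ∈ s(w, w') := h ▸ Sym2.mem_mk_left u u'
    simp [hu.2.1, hu.2.2] at this

theorem sum_two_pow_degree_le (hV : 4 ≤ Fintype.card V) (hδ : ∀ v, 2 ≤ G.degree v) :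
    ∑ v, 2 ^ G.degree v ≤ 2 ^ #G.edgeFinset := by
  classical
  refine sum_two_pow_le_two_pow_of_sum_eq (fun v => G.degree v) hV
    G.sum_degrees_eq_twice_card_edges hδ fun v => ?_
  have := G.degree_add_card_filter_notMem_edgeFinset v
  have := G.two_le_card_filter_notMem_edgeFinset hV hδ v
  omega

end SimpleGraph

section WPSystem

variable {V : Type} (α : V → ℕ)

def edgeGcd : Sym2 V → ℕ :=
  Sym2.lift ⟨fun a b => Nat.gcd (α a) (α b), fun _ _ => Nat.gcd_comm _ _⟩

@[simp]
theorem edgeGcd_mk (a b : V) : edgeGcd α s(a, b) = Nat.gcd (α a) (α b) := rfl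

variable {α}

theorem edgeGcd_dvd {e : Sym2 V} {v : V} (hv : v ∈ e) : edgeGcd α e ∣ α v := by
  induction e using Sym2.ind with
  | h a b =>
    rcases Sym2.mem_iff.mp hv with rfl | rfl
    exacts [Nat.gcd_dvd_left _ _, Nat.gcd_dvd_right _ _]

theorem one_lt_edgeGcd {e : Sym2 V} (he : e ∈ (coprimeGraph α).edgeSet) : 1 < edgeGcd α e := by
  induction e using Sym2.ind with
  | h a b => exact he.2

theorem WPSystem.coprime_edgeGcd (hα : WPSystem α) {e : Sym2 V} (he : ¬e.IsDiag) {v : V}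
    (hv : v ∉ e) : Nat.Coprime (edgeGcd α e) (α v) := by
  induction e using Sym2.ind with
  | h a b =>
    simp only [Sym2.mem_iff, not_or] at hv
    exact hα.2 a b v he (Ne.symm hv.1) (Ne.symm hv.2)

theorem WPSystem.coprime_edgeGcd_edgeGcd (hα : WPSystem α) {e f : Sym2 V} (he : ¬e.IsDiag)
    (hf : ¬f.IsDiag) (hef : e ≠ f) : Nat.Coprime (edgeGcd α e) (edgeGcd α f) := by
  obtain ⟨x, hxf, hxe⟩ : ∃ x ∈ f, x ∉ e := by
    induction f using Sym2.ind with
    | h c d =>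
      by_contra! h
      exact hef (Sym2.eq_of_ne_mem hf (h c (Sym2.mem_mk_left c d)) (h d (Sym2.mem_mk_right c d))
        (Sym2.mem_mk_left c d) (Sym2.mem_mk_right c d))
  exact (hα.coprime_edgeGcd he hxe).coprime_dvd_right (edgeGcd_dvd hxf)

theorem WPSystem.mul_two_pow_card_le_lcm [Fintype V] (hα : WPSystem α) {s : Finset (Sym2 V)}
    (hs : ∀ e ∈ s, e ∈ (coprimeGraph α).edgeSet) {v : V} (hv : ∀ e ∈ s, v ∉ e) :
    α v * 2 ^ #s ≤ univ.lcm α := by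
  have hdiag : ∀ e ∈ s, ¬e.IsDiag := fun e he =>
    (coprimeGraph α).not_isDiag_of_mem_edgeSet (hs e he)
  have hlcm : 0 < univ.lcm α :=
    Nat.pos_of_ne_zero fun h => by
      obtain ⟨w, -, hw⟩ := lcm_eq_zero_iff.mp h
      exact absurd (hα.1 w) (by omega)
  have hprod : ∏ e ∈ s, edgeGcd α e ∣ univ.lcm α := by
    refine Nat.prod_dvd_of_pairwise_coprime (fun e he f hf hef =>
      hα.coprime_edgeGcd_edgeGcd (hdiag e he) (hdiag f hf) hef) fun e _ => ?_
    induction e using Sym2.ind with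
    | h a b => exact (edgeGcd_dvd (Sym2.mem_mk_left a b)).trans (dvd_lcm (mem_univ a))
  have hcop : Nat.Coprime (α v) (∏ e ∈ s, edgeGcd α e) :=
    Nat.Coprime.prod_right fun e he => (hα.coprime_edgeGcd (hdiag e he) (hv e he)).symm
  calc α v * 2 ^ #s ≤ α v * ∏ e ∈ s, edgeGcd α e :=
        Nat.mul_le_mul_left _ (pow_card_le_prod _ _ _ fun e he => one_lt_edgeGcd (hs e he))
    _ ≤ univ.lcm α :=
        Nat.le_of_dvd hlcm (hcop.mul_dvd_of_dvd_of_dvd (dvd_lcm (mem_univ v)) hprod)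

end WPSystem

theorem stmt4_general {V : Type} [Fintype V] [DecidableEq V] (α : V → ℕ)
    (hcard : 4 ≤ Fintype.card V)
    (hWP : WPSystem α)
    (hdeg : ∀ v : V,
      2 ≤ (Finset.univ.filter (fun w => w ≠ v ∧ 1 < Nat.gcd (α v) (α w))).card) :
    ∑ v : V, α v ≤ Finset.univ.lcm α := by
  classical
  set G := coprimeGraph α
  set E := G.edgeFinset
  have hδ : ∀ v, 2 ≤ G.degree v := fun v => by
    rw [← G.card_neighborFinset_eq_degree, G.neighborFinset_eq_filter]
    convert hdeg v using 3 with w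
    exact and_congr_left' ne_comm
  have hweight : ∀ v, α v * 2 ^ #{e ∈ E | v ∉ e} ≤ univ.lcm α := fun v =>
    hWP.mul_two_pow_card_le_lcm (fun e he => G.mem_edgeFinset.mp (mem_filter.mp he).1)
      fun e he => (mem_filter.mp he).2
  refine le_of_mul_le_mul_right (a := 2 ^ #E) ?_ (by positivity)
  calc (∑ v, α v) * 2 ^ #E = ∑ v, α v * 2 ^ #{e ∈ E | v ∉ e} * 2 ^ G.degree v := by
        rw [sum_mul]
        refine sum_congr rfl fun v _ => ?_
        rw [mul_assoc, ← pow_add, add_comm, G.degree_add_card_filter_notMem_edgeFinset]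
    _ ≤ ∑ v, univ.lcm α * 2 ^ G.degree v :=
        sum_le_sum fun v _ => Nat.mul_le_mul_right _ (hweight v)
    _ = univ.lcm α * ∑ v, 2 ^ G.degree v := (mul_sum _ _ _).symm
    _ ≤ univ.lcm α * 2 ^ #E := Nat.mul_le_mul_left _ (G.sum_two_pow_degree_le hcard hδ)

/-- a WP-weight system on a set with at least `4` elements, with
connected coprimality graph, no weak vertex, and every vertex incident to at
least two edges, satisfies `lcm ≥ Σ`. -/
theorem stmt4 {V : Type} [Fintype V] [DecidableEq V] (α : V → ℕ)
    (hcard : 4 ≤ Fintype.card V)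
    (hWP : WPSystem α)
    (hconn : (coprimeGraph α).Connected)
    (hweak : ∀ v : V, ¬ IsWeak α v)
    (hdeg : ∀ v : V,
      2 ≤ (Finset.univ.filter (fun w => w ≠ v ∧ 1 < Nat.gcd (α v) (α w))).card) :
    ∑ v : V, α v ≤ Finset.univ.lcm α :=
  stmt4_general α hcard hWP hdeg
end

section
/- Let α : V → ℕ be a WP-weight system on a finite set V such that the associated coprimality graph is connected and no vertex of V is weak. Suppose there is a vertex v ∈ V that is incident to exactly one edge of the coprimality graph, and let V′ = V \ {v} with the restricted weight function α′. If lcm_{w ∈ V′} α(w) ≥ (∑_{w ∈ V′} α(w)) − 1, then lcm_{w ∈ V} α(w) ≥ ∑_{w ∈ V} α(w). -/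
/-!
Let `u` be the unique neighbour of `v`, and let `L'` and `S` be the lcm and the sum of the weights
on `V' = V \ {v}`. Since `α v` is coprime to every weight on `V' \ {u}`, the gcd of `α v` and `L'`
is `g = gcd (α v) (α u)`, so `lcm α = m * L'` where `α v = g * m`. As `v` is not weak, `α v ∤ L'`,
whence `m ≥ 2`; as `u` is not weak, `α u ≥ 2 * g`. Together with `S - 1 ≤ L'` this gives
`S + 2 * g ≤ 2 * L'`, and then `α v + S = g * m + S ≤ m * L'`.
-/

lemma Nat.gcd_lcm_eq_gcd_of_coprime {a b c : ℕ} (h : a.Coprime c) :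
    Nat.gcd a (Nat.lcm b c) = Nat.gcd a b :=
  Nat.dvd_antisymm
    ((Nat.gcd_dvd_gcd_of_dvd_right a (Nat.lcm_dvd_mul b c)).trans
      (Nat.Coprime.gcd_mul_right_cancel_right b h.symm).dvd)
    (Nat.gcd_dvd_gcd_of_dvd_right a (Nat.dvd_lcm_left b c))

lemma Nat.Coprime.finset_lcm_right {ι : Type*} {a : ℕ} {s : Finset ι} {f : ι → ℕ}
    (h : ∀ i ∈ s, a.Coprime (f i)) : a.Coprime (s.lcm f) :=
  (Nat.Coprime.prod_right h).coprime_dvd_right (Finset.lcm_dvd_prod s f)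

lemma Finset.gcd_lcm_eq_of_coprime_erase {ι : Type*} [DecidableEq ι] {s : Finset ι}
    {f : ι → ℕ} {a : ℕ} {u : ι} (hu : u ∈ s) (h : ∀ i ∈ s.erase u, a.Coprime (f i)) :
    Nat.gcd a (s.lcm f) = Nat.gcd a (f u) := by
  rw [← Finset.insert_erase hu, Finset.lcm_insert]
  exact Nat.gcd_lcm_eq_gcd_of_coprime (Nat.Coprime.finset_lcm_right h)

lemma Nat.two_mul_gcd_le_of_not_dvd {a b : ℕ} (hb : b ≠ 0) (h : ¬ b ∣ a) :
    2 * Nat.gcd a b ≤ b := by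
  by_contra! hlt
  have hgb : b = Nat.gcd a b := Nat.eq_of_dvd_of_lt_two_mul hb (Nat.gcd_dvd_right a b) hlt
  exact h (hgb ▸ Nat.gcd_dvd_left a b)

lemma Nat.add_le_lcm_of_not_dvd {a L S : ℕ} (ha : ¬ a ∣ L)
    (hS : S + 2 * Nat.gcd a L ≤ 2 * L) : a + S ≤ Nat.lcm a L := by
  rcases Nat.eq_zero_or_pos a with rfl | ha0
  · simp only [Nat.gcd_zero_left] at hS
    simp only [Nat.lcm_zero_left]
    omega
  obtain ⟨m, hm⟩ := Nat.gcd_dvd_left a L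
  set g := Nat.gcd a L
  have hg0 : 0 < g := Nat.gcd_pos_of_pos_left L ha0
  have hm2 : 2 ≤ m := by
    rcases m with _ | _ | m
    · omega
    · exact absurd (hm ▸ (by simpa using Nat.gcd_dvd_right a L)) ha
    · omega
  have hlcm : Nat.lcm a L = m * L :=
    Nat.eq_of_mul_eq_mul_left hg0 (by rw [Nat.gcd_mul_lcm, hm]; ring)
  rw [hlcm, hm]
  nlinarith [Nat.mul_le_mul_left m hS, Nat.mul_le_mul_right S hm2]

lemma Finset.sum_add_le_two_mul_lcm {ι : Type*} [DecidableEq ι] {s : Finset ι} {f : ι → ℕ}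
    {u : ι} {c : ℕ} (hu : u ∈ s) (hf : ∀ i ∈ s, 2 ≤ f i) (hc : c ≤ f u)
    (hs : (∑ i ∈ s, f i) - 1 ≤ s.lcm f) : (∑ i ∈ s, f i) + c ≤ 2 * s.lcm f := by
  have hlcm : s.lcm f ≠ 0 := fun h0 => by
    obtain ⟨i, hi, hfi⟩ := Finset.lcm_eq_zero_iff.mp h0
    exact absurd (hf i hi) (by omega)
  have hfu : f u ≤ s.lcm f := Nat.le_of_dvd (Nat.pos_of_ne_zero hlcm) (Finset.dvd_lcm hu)
  rw [← Finset.add_sum_erase s f hu] at hs ⊢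
  rcases (s.erase u).eq_empty_or_nonempty with hrest | ⟨x, hx⟩
  · rw [hrest, Finset.sum_empty] at hs ⊢
    omega
  · have hfx : f x ≤ ∑ i ∈ s.erase u, f i := Finset.single_le_sum (fun _ _ => Nat.zero_le _) hx
    have := hf x (Finset.mem_of_mem_erase hx)
    omega

theorem stmt5_general {V : Type} [Fintype V] [DecidableEq V] (α : V → ℕ)
    (hWP : WPSystem α)
    (hweak : ∀ w : V, ¬ IsWeak α w)
    (v : V)
    (hone : (Finset.univ.filter (fun w => w ≠ v ∧ 1 < Nat.gcd (α v) (α w))).card = 1)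
    (hind : (∑ w ∈ Finset.univ.erase v, α w) - 1 ≤ (Finset.univ.erase v).lcm α) :
    ∑ w : V, α w ≤ Finset.univ.lcm α := by
  obtain ⟨u, hu⟩ := Finset.card_eq_one.mp hone
  have hneighbour : ∀ w, w ≠ v ∧ 1 < Nat.gcd (α v) (α w) ↔ w = u := fun w => by
    simpa using Finset.ext_iff.mp hu w
  obtain ⟨huv, hvu⟩ := (hneighbour u).mpr rfl
  set s := Finset.univ.erase v
  have hus : u ∈ s := Finset.mem_erase.mpr ⟨huv, Finset.mem_univ u⟩
  have hcop : ∀ w ∈ s.erase u, (α v).Coprime (α w) := fun w hw => by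
    obtain ⟨hwu, hws⟩ := Finset.mem_erase.mp hw
    have hwv := Finset.ne_of_mem_erase hws
    have hpos := Nat.gcd_pos_of_pos_left (α w) (show 0 < α v by linarith [hWP.1 v])
    by_contra hnot
    exact hwu ((hneighbour w).mp ⟨hwv, by rw [Nat.Coprime] at hnot; omega⟩)
  have hg := Finset.gcd_lcm_eq_of_coprime_erase hus hcop
  have hv_not_dvd : ¬ α v ∣ s.lcm α := fun h => by
    rw [Nat.gcd_eq_left h] at hg
    exact hweak v ⟨u, huv, hvu, hg ▸ Nat.gcd_dvd_right _ _⟩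
  have hu_gcd : 2 * Nat.gcd (α v) (α u) ≤ α u :=
    Nat.two_mul_gcd_le_of_not_dvd (by linarith [hWP.1 u])
      (fun h => hweak u ⟨v, huv.symm, Nat.gcd_comm (α u) (α v) ▸ hvu, h⟩)
  have hS := Finset.sum_add_le_two_mul_lcm hus (fun w _ => hWP.1 w) hu_gcd hind
  rw [← hg] at hS
  calc ∑ w, α w = α v + ∑ w ∈ s, α w := (Finset.add_sum_erase _ _ (Finset.mem_univ v)).symm
    _ ≤ Nat.lcm (α v) (s.lcm α) := Nat.add_le_lcm_of_not_dvd hv_not_dvd hS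
    _ = Finset.univ.lcm α := by
      conv_rhs => rw [← Finset.insert_erase (Finset.mem_univ v), Finset.lcm_insert]
      rfl

/-- a WP-weight system with connected coprimality graph and no
weak vertex, having a vertex `v` incident to exactly one edge; if the system
restricted to `V \ {v}` satisfies `lcm ≥ Σ − 1`, then `lcm ≥ Σ` for the whole
system. -/
theorem stmt5 {V : Type} [Fintype V] [DecidableEq V] (α : V → ℕ)
    (hWP : WPSystem α)
    (hconn : (coprimeGraph α).Connected)
    (hweak : ∀ w : V, ¬ IsWeak α w)
    (v : V)
    (hone : (Finset.univ.filter (fun w => w ≠ v ∧ 1 < Nat.gcd (α v) (α w))).card = 1)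
    (hind : (∑ w ∈ Finset.univ.erase v, α w) - 1 ≤ (Finset.univ.erase v).lcm α) :
    ∑ w : V, α w ≤ Finset.univ.lcm α :=
  stmt5_general α hWP hweak v hone hind
end

section
/- Let α : V → ℕ be a WP-weight system on a finite nonempty set V such that the associated coprimality graph is connected and no vertex of V is weak. Then lcm_{v ∈ V} α(v) ≥ (∑_{v ∈ V} α(v)) − 1; moreover lcm_{v ∈ V} α(v) ≥ ∑_{v ∈ V} α(v) unless V has exactly three elements and the multiset of values {α(v) : v ∈ V} equals {6, 10, 15}. -/
open Finset
open scoped Nat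

namespace Nat

theorem two_mul_le_of_dvd_of_ne {a m : ℕ} (h : a ∣ m) (hm : m ≠ 0) (ha : m ≠ a) : 2 * a ≤ m := by
  obtain ⟨k, rfl⟩ := h
  have hk0 : k ≠ 0 := by rintro rfl; simp at hm
  have hk1 : k ≠ 1 := by rintro rfl; simp at ha
  nlinarith [show 2 ≤ k by omega]

theorem add_le_lcm_of_not_dvd_s6 {a b : ℕ} (hab : ¬ a ∣ b) (hba : ¬ b ∣ a) : a + b ≤ lcm a b := by
  have hl : lcm a b ≠ 0 := lcm_ne_zero (by rintro rfl; simp at hba) (by rintro rfl; simp at hab)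
  have ha := two_mul_le_of_dvd_of_ne (dvd_lcm_left a b) hl fun h => hba (h ▸ dvd_lcm_right a b)
  have hb := two_mul_le_of_dvd_of_ne (dvd_lcm_right a b) hl fun h => hab (h ▸ dvd_lcm_left a b)
  omega

theorem mul_mul_dvd_lcm_mul_lcm {x y z : ℕ} (h : gcd (gcd x y) z = 1) :
    x * y * z ∣ lcm x y * lcm y z := by
  have hgz : gcd x y * z ∣ lcm y z :=
    Coprime.mul_dvd_of_dvd_of_dvd h ((gcd_dvd_right x y).trans (dvd_lcm_left y z))
      (dvd_lcm_right y z)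
  calc x * y * z = lcm x y * (gcd x y * z) := by rw [← gcd_mul_lcm x y]; ring
    _ ∣ lcm x y * lcm y z := mul_dvd_mul_left _ hgz

theorem pow_three_le_sq_of_gcd_eq_one {L x y z : ℕ} (hL : L ≠ 0) (hx : x ∣ L) (hy : y ∣ L)
    (hz : z ∣ L) (hzx : z ≤ x) (hzy : z ≤ y) (h : gcd (gcd x y) z = 1) : z ^ 3 ≤ L ^ 2 := by
  have hxy : lcm x y ≤ L := le_of_dvd (pos_of_ne_zero hL) (lcm_dvd hx hy)
  have hyz : lcm y z ≤ L := le_of_dvd (pos_of_ne_zero hL) (lcm_dvd hy hz)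
  have hpos : 0 < lcm x y * lcm y z := by
    apply pos_of_ne_zero
    exact mul_ne_zero (ne_zero_of_dvd_ne_zero hL (lcm_dvd hx hy))
      (ne_zero_of_dvd_ne_zero hL (lcm_dvd hy hz))
  calc z ^ 3 ≤ x * y * z := by rw [pow_succ, sq]; gcongr
    _ ≤ lcm x y * lcm y z := le_of_dvd hpos (mul_mul_dvd_lcm_mul_lcm h)
    _ ≤ L ^ 2 := by rw [sq]; gcongr

theorem mul_mul_le_mul_of_pow_three_le {L m x c d : ℕ} (hx : x ^ 3 ≤ L ^ 2)
    (hm : (c * m) ^ 3 ≤ d ^ 3 * L) : c * m * x ≤ d * L := by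
  refine (Nat.pow_le_pow_iff_left (n := 3) (by norm_num)).mp ?_
  calc (c * m * x) ^ 3 = (c * m) ^ 3 * x ^ 3 := by ring
    _ ≤ d ^ 3 * L * L ^ 2 := Nat.mul_le_mul hm hx
    _ = (d * L) ^ 3 := by ring

theorem lt_of_mul_eq_mul_of_not_dvd {u v s t : ℕ} (h : u * s = v * t) (hs : s ≠ 0)
    (hvu : v ≤ u) (hnd : ¬ v ∣ u) : s < t := by
  have hvu' : v < u := lt_of_le_of_ne hvu fun h => hnd (h ▸ dvd_refl v)
  by_contra! hts
  have : v * t < u * s := lt_of_le_of_lt (Nat.mul_le_mul_left v hts)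
    (Nat.mul_lt_mul_of_pos_right hvu' (pos_of_ne_zero hs))
  omega

theorem not_dvd_of_mul_eq_mul {u v s t : ℕ} (h : u * s = v * t) (hs : s ≠ 0)
    (hnd : ¬ v ∣ u) : ¬ s ∣ t := by
  rintro ⟨k, rfl⟩
  exact hnd ⟨k, Nat.eq_of_mul_eq_mul_right (pos_of_ne_zero hs) (by rw [h]; ring)⟩

theorem mul_add_mul_add_mul_le_mul_mul {p q r : ℕ} (hp : 2 ≤ p) (hpq : p < q) (hqr : q < r)
    (hpq' : ¬ p ∣ q) (hpr' : ¬ p ∣ r) (hne : (p, q, r) ≠ (2, 3, 5)) :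
    q * r + p * r + p * q ≤ p * q * r := by
  rcases hp.eq_or_lt with rfl | hp3
  · rcases (show 3 ≤ q by omega).eq_or_lt with rfl | hq5
    · have : r ≠ 5 := by rintro rfl; exact hne rfl
      omega
    · nlinarith [show 5 ≤ q by omega]
  · nlinarith [Nat.mul_le_mul_right r (Nat.mul_le_mul_right q (show 3 ≤ p by omega))]

theorem add_add_le_or_eq_of_not_dvd {L a b c : ℕ} (hL : L ≠ 0) (ha : a ∣ L) (hb : b ∣ L)
    (hc : c ∣ L) (hba : b ≤ a) (hcb : c ≤ b) (hba' : ¬ b ∣ a) (hcb' : ¬ c ∣ b)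
    (hca' : ¬ c ∣ a) (h : gcd (gcd a b) c = 1) :
    a + b + c ≤ L ∨ (a = 15 ∧ b = 10 ∧ c = 6) := by
  obtain ⟨p, hp⟩ := ha
  obtain ⟨q, hq⟩ := hb
  obtain ⟨r, hr⟩ := hc
  have hp0 : p ≠ 0 := by rintro rfl; simp_all
  have hq0 : q ≠ 0 := by rintro rfl; simp_all
  have hpq := lt_of_mul_eq_mul_of_not_dvd (hp.symm.trans hq) hp0 hba hba'
  have hqr := lt_of_mul_eq_mul_of_not_dvd (hq.symm.trans hr) hq0 hcb hcb'
  have hp1 : p ≠ 1 := by rintro rfl; exact hba' ⟨q, by rw [← hq, hp, mul_one]⟩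
  by_cases hpqr : (p, q, r) = (2, 3, 5)
  · -- `L = 2a = 3b = 5c`, so `a`, `b`, `c` are `15`, `10`, `6` times `L / 30 = c / 6`.
    right
    simp only [Prod.mk.injEq] at hpqr
    obtain ⟨rfl, rfl, rfl⟩ := hpqr
    obtain ⟨t, rfl, rfl, rfl⟩ : ∃ t, a = 15 * t ∧ b = 10 * t ∧ c = 6 * t :=
      ⟨c / 6, by omega, by omega, by omega⟩
    rw [Nat.gcd_mul_right, Nat.gcd_mul_right] at h
    norm_num at h
    omega
  · left
    have hrec := mul_add_mul_add_mul_le_mul_mul (by omega) hpq hqr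
      (not_dvd_of_mul_eq_mul (hp.symm.trans hq) hp0 hba')
      (not_dvd_of_mul_eq_mul (hp.symm.trans hr) hp0 hca') hpqr
    have hpqr0 : 0 < p * q * r := Nat.mul_pos (Nat.mul_pos (by omega) (by omega)) (by omega)
    refine Nat.le_of_mul_le_mul_right ?_ hpqr0
    calc (a + b + c) * (p * q * r) = a * p * (q * r) + b * q * (p * r) + c * r * (p * q) := by
          ring
      _ = L * (q * r + p * r + p * q) := by rw [← hp, ← hq, ← hr]; ring
      _ ≤ L * (p * q * r) := Nat.mul_le_mul_left L hrec

theorem factorial_card_add_one_le_prod (S : Finset ℕ) (hS : ∀ x ∈ S, 2 ≤ x) :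
    (#S + 1)! ≤ ∏ x ∈ S, x := by
  induction S using Finset.induction_on_max with
  | empty => simp
  | insert a s hlt ih =>
    have has : a ∉ s := fun h => lt_irrefl a (hlt a h)
    have hsub : s ⊆ Ioo 1 a := fun x hx =>
      mem_Ioo.mpr ⟨hS x (mem_insert_of_mem hx), hlt x hx⟩
    have hcard := card_le_card hsub
    rw [card_Ioo] at hcard
    have ha : #s + 2 ≤ a := by have := hS a (mem_insert_self a s); omega
    rw [card_insert_of_notMem has, prod_insert has, factorial_succ]
    exact Nat.mul_le_mul ha (ih fun x hx => hS x (mem_insert_of_mem hx))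

theorem cube_mul_le_factorial (m : ℕ) (hm : 2 ≤ m) : (15 * m) ^ 3 ≤ 11 ^ 3 * (m + 2)! := by
  induction m, hm using Nat.le_induction with
  | base => decide
  | succ m hm ih =>
    have hstep : (m + 1) ^ 3 ≤ (m + 3) * m ^ 3 := by nlinarith [mul_le_mul' hm hm]
    calc (15 * (m + 1)) ^ 3 = 15 ^ 3 * (m + 1) ^ 3 := by ring
      _ ≤ 15 ^ 3 * ((m + 3) * m ^ 3) := by gcongr
      _ = (m + 3) * (15 * m) ^ 3 := by ring
      _ ≤ (m + 3) * (11 ^ 3 * (m + 2)!) := by gcongr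
      _ = 11 ^ 3 * (m + 1 + 2)! := by
          rw [show m + 1 + 2 = m + 2 + 1 by ring, factorial_succ (m + 2)]; ring

theorem exists_prime_pow_eq_of_lt_ten {m : ℕ} (h0 : m ≠ 0) (h6 : m ≠ 6) (h10 : m < 10) :
    ∃ p k, p.Prime ∧ m = p ^ k := by
  interval_cases m
  exacts [absurd rfl h0, ⟨2, 0, prime_two, rfl⟩, ⟨2, 1, prime_two, rfl⟩, ⟨3, 1, prime_three, rfl⟩,
    ⟨2, 2, prime_two, rfl⟩, ⟨5, 1, prime_five, rfl⟩, absurd rfl h6, ⟨7, 1, by norm_num, rfl⟩,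
    ⟨2, 3, prime_two, rfl⟩, ⟨3, 2, prime_three, rfl⟩]

end Nat

theorem Finset.exists_max_and_max_erase {V β : Type*} [Fintype V] [LinearOrder β] (f : V → β)
    (h : 2 ≤ Fintype.card V) : ∃ i j, i ≠ j ∧ (∀ v, f v ≤ f i) ∧ ∀ v ≠ i, f v ≤ f j := by
  classical
  obtain ⟨i, -, hi⟩ := exists_max_image univ f (univ_nonempty_iff.mpr
    (Fintype.card_pos_iff.mp (by omega)))
  obtain ⟨j, hj, hj'⟩ := exists_max_image (univ.erase i) f
    (by rw [← card_pos, card_erase_of_mem (mem_univ i), card_univ]; omega)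
  exact ⟨i, j, (ne_of_mem_erase hj).symm, fun v => hi v (mem_univ v),
    fun v hv => hj' v (mem_erase.mpr ⟨hv, mem_univ v⟩)⟩

theorem Finset.sum_univ_eq_add_add_sum_erase_erase {V M : Type*} [Fintype V] [DecidableEq V]
    [AddCommMonoid M] (f : V → M) {i j : V} (hij : i ≠ j) :
    ∑ v, f v = f i + f j + ∑ v ∈ (univ.erase i).erase j, f v := by
  rw [← add_sum_erase _ _ (mem_univ i),
    ← add_sum_erase _ _ (mem_erase.mpr ⟨hij.symm, mem_univ j⟩), add_assoc]

namespace WPSystem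

variable {V : Type} {α : V → ℕ}

theorem eq_or_eq_or_eq_of_dvd (hα : WPSystem α) {p : ℕ} (hp : p ≠ 1) {u v w : V}
    (hu : p ∣ α u) (hv : p ∣ α v) (hw : p ∣ α w) : u = v ∨ u = w ∨ v = w := by
  by_contra! h
  have := hα.2 u v w h.1 h.2.1 h.2.2 ▸ Nat.dvd_gcd (Nat.dvd_gcd hu hv) hw
  exact hp (Nat.dvd_one.mp this)

theorem pairwise_not_dvd (hα : WPSystem α) (hweak : ∀ v, ¬ IsWeak α v) :
    Pairwise fun v w => ¬ α v ∣ α w := by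
  intro v w hvw hdvd
  refine hweak v ⟨w, hvw.symm, ?_, hdvd⟩
  rw [Nat.gcd_eq_left hdvd]
  exact hα.1 v

theorem lcm_ne_zero [Fintype V] (hα : WPSystem α) : univ.lcm α ≠ 0 := by
  simp only [ne_eq, Finset.lcm_eq_zero_iff, mem_univ, true_and, not_exists]
  exact fun v h => by simpa [h] using hα.1 v

theorem card_sub_one_le_card_primeFactors_lcm [Fintype V] (hα : WPSystem α)
    (hconn : (coprimeGraph α).Connected) :
    Fintype.card V - 1 ≤ #(univ.lcm α).primeFactors := by
  classical
  have hedges := hconn.card_vert_le_card_edgeSet_add_one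
  rw [Nat.card_eq_fintype_card, Nat.card_eq_fintype_card, ← SimpleGraph.edgeFinset_card] at hedges
  suffices #(coprimeGraph α).edgeFinset ≤ #(univ.lcm α).primeFactors by omega
  refine card_le_card_of_forall_subsingleton (fun e p => ∀ v ∈ e, p ∣ α v) ?_ ?_
  · rintro ⟨v, w⟩ he
    obtain ⟨-, hvw⟩ : (coprimeGraph α).Adj v w := SimpleGraph.mem_edgeFinset.mp he
    have hp : (Nat.gcd (α v) (α w)).minFac ∣ Nat.gcd (α v) (α w) := Nat.minFac_dvd _
    refine ⟨_, Nat.mem_primeFactors.mpr ⟨Nat.minFac_prime (by omega),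
      hp.trans ((Nat.gcd_dvd_left _ _).trans (dvd_lcm (mem_univ v))), hα.lcm_ne_zero⟩, ?_⟩
    simp only [Sym2.mem_iff, forall_eq_or_imp, forall_eq]
    exact ⟨hp.trans (Nat.gcd_dvd_left _ _), hp.trans (Nat.gcd_dvd_right _ _)⟩
  · rintro p hp ⟨a, b⟩ ⟨hab, hpab⟩ ⟨c, d⟩ ⟨hcd, hpcd⟩
    have hp1 : p ≠ 1 := (Nat.prime_of_mem_primeFactors hp).ne_one
    have hpa := hpab a (Sym2.mem_mk_left a b)
    have hpb := hpab b (Sym2.mem_mk_right a b)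
    have hc := hα.eq_or_eq_or_eq_of_dvd hp1 hpa hpb (hpcd c (Sym2.mem_mk_left c d))
    have hd := hα.eq_or_eq_or_eq_of_dvd hp1 hpa hpb (hpcd d (Sym2.mem_mk_right c d))
    have hab' : a ≠ b := (SimpleGraph.mem_edgeFinset.mp hab).1
    have hcd' : c ≠ d := (SimpleGraph.mem_edgeFinset.mp hcd).1
    rw [Sym2.eq_iff]
    grind

theorem factorial_card_le_lcm [Fintype V] (hα : WPSystem α)
    (hconn : (coprimeGraph α).Connected) : (Fintype.card V)! ≤ univ.lcm α := by
  have hP := hα.card_sub_one_le_card_primeFactors_lcm hconn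
  calc (Fintype.card V)! ≤ (#(univ.lcm α).primeFactors + 1)! := Nat.factorial_le (by omega)
    _ ≤ ∏ p ∈ (univ.lcm α).primeFactors, p := Nat.factorial_card_add_one_le_prod _
        fun p hp => (Nat.prime_of_mem_primeFactors hp).two_le
    _ ≤ univ.lcm α :=
        Nat.le_of_dvd (Nat.pos_of_ne_zero hα.lcm_ne_zero) (Nat.prod_primeFactors_dvd _)

section FourVertices

variable [Fintype V] (hα : WPSystem α) (hnd : Pairwise fun v w => ¬ α v ∣ α w)
  (hcard : 4 ≤ Fintype.card V)
include hα hnd hcard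

theorem lcm_ne_mul_prime_pow (i : V) {p k : ℕ} (hp : p.Prime) : univ.lcm α ≠ α i * p ^ k := by
  classical
  intro hL
  have hpj : ∀ j ≠ i, p ∣ α j := by
    intro j hj
    by_contra hpj
    have hcop : Nat.Coprime (α j) (p ^ k) := ((hp.coprime_iff_not_dvd.mpr hpj).symm).pow_right k
    exact hnd hj (hcop.dvd_of_dvd_mul_right (hL ▸ dvd_lcm (mem_univ j)))
  have h3 : 2 < #(univ.erase i) := by rw [card_erase_of_mem (mem_univ i), card_univ]; omega
  obtain ⟨a, ha, b, hb, c, hc, hab, hac, hbc⟩ := two_lt_card.mp h3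
  rcases hα.eq_or_eq_or_eq_of_dvd hp.ne_one (hpj a (ne_of_mem_erase ha))
    (hpj b (ne_of_mem_erase hb)) (hpj c (ne_of_mem_erase hc)) with h | h | h <;> contradiction

theorem six_mul_le_lcm (i : V) : 6 * α i ≤ univ.lcm α := by
  obtain ⟨m, hm⟩ : α i ∣ univ.lcm α := dvd_lcm (mem_univ i)
  have hm0 : m ≠ 0 := by rintro rfl; exact hα.lcm_ne_zero (by simpa using hm)
  suffices 6 ≤ m by rw [hm, mul_comm]; gcongr
  by_contra! h
  obtain ⟨p, k, hp, rfl⟩ := Nat.exists_prime_pow_eq_of_lt_ten hm0 (by omega) (by omega)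
  exact hα.lcm_ne_mul_prime_pow hnd hcard i hp hm

theorem ten_mul_le_lcm {i j : V} (hij : i ≠ j) (hji : α j ≤ α i) : 10 * α j ≤ univ.lcm α := by
  obtain ⟨m, hm⟩ : α j ∣ univ.lcm α := dvd_lcm (mem_univ j)
  have hj6 := hα.six_mul_le_lcm hnd hcard j
  have hi6 := hα.six_mul_le_lcm hnd hcard i
  have hαj : 0 < α j := by have := hα.1 j; omega
  have hm6 : 6 ≤ m := by rw [hm, mul_comm] at hj6; exact Nat.le_of_mul_le_mul_left hj6 hαj
  -- `m = 6` would force `α i = α j`.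
  have hm6' : m ≠ 6 := by
    rintro rfl
    exact hnd hij.symm ⟨1, by omega⟩
  suffices 10 ≤ m by rw [hm, mul_comm]; gcongr
  by_contra! h
  obtain ⟨p, k, hp, rfl⟩ := Nat.exists_prime_pow_eq_of_lt_ten (by omega) hm6' h
  exact hα.lcm_ne_mul_prime_pow hnd hcard j hp hm

theorem sum_le_lcm_of_four_le_card (hconn : (coprimeGraph α).Connected) :
    ∑ v, α v ≤ univ.lcm α := by
  classical
  set L := univ.lcm α
  obtain ⟨i, j, hij, hi, hj⟩ := exists_max_and_max_erase α (by omega)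
  have hsmall : ∀ v ∈ (univ.erase i).erase j, 15 * (Fintype.card V - 2) * α v ≤ 11 * L := by
    intro v hv
    obtain ⟨hvj, hvi, -⟩ := by simpa only [mem_erase] using hv
    have hcube : α v ^ 3 ≤ L ^ 2 :=
      Nat.pow_three_le_sq_of_gcd_eq_one hα.lcm_ne_zero (dvd_lcm (mem_univ i))
        (dvd_lcm (mem_univ j)) (dvd_lcm (mem_univ v)) (hi v) (hj v hvi)
        (hα.2 i j v hij (Ne.symm hvi) (Ne.symm hvj))
    have hfac : (15 * (Fintype.card V - 2)) ^ 3 ≤ 11 ^ 3 * L := by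
      refine (Nat.cube_mul_le_factorial _ (by omega)).trans (Nat.mul_le_mul_left _ ?_)
      rw [Nat.sub_add_cancel (by omega)]
      exact hα.factorial_card_le_lcm hconn
    exact Nat.mul_mul_le_mul_of_pow_three_le hcube hfac
  have hrest : 15 * ∑ v ∈ (univ.erase i).erase j, α v ≤ 11 * L := by
    have hsum := sum_le_card_nsmul _ _ _ hsmall
    rw [← mul_sum, card_erase_of_mem (mem_erase.mpr ⟨hij.symm, mem_univ j⟩),
      card_erase_of_mem (mem_univ i), card_univ, smul_eq_mul, Nat.sub_sub] at hsum
    exact Nat.le_of_mul_le_mul_left (by linarith) (show 0 < Fintype.card V - 2 by omega)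
  have hi6 := hα.six_mul_le_lcm hnd hcard i
  have hj10 := hα.ten_mul_le_lcm hnd hcard hij (hi j)
  rw [sum_univ_eq_add_add_sum_erase_erase α hij]
  omega

end FourVertices

theorem sum_le_lcm_of_card_le_two [Fintype V] (hα : WPSystem α)
    (hnd : Pairwise fun v w => ¬ α v ∣ α w) (hcard : Fintype.card V ≤ 2) :
    ∑ v, α v ≤ univ.lcm α := by
  classical
  have hL := Nat.pos_of_ne_zero hα.lcm_ne_zero
  interval_cases h : Fintype.card V
  · simp [univ_eq_empty_iff.mpr (Fintype.card_eq_zero_iff.mp h)]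
  · obtain ⟨x, hx⟩ := card_eq_one.mp (card_univ.trans h)
    rw [show ∑ v, α v = α x by rw [hx, sum_singleton]]
    exact Nat.le_of_dvd hL (dvd_lcm (mem_univ x))
  · obtain ⟨x, y, hxy, hxy'⟩ := card_eq_two.mp (card_univ.trans h)
    rw [show ∑ v, α v = α x + α y by rw [hxy', sum_pair hxy]]
    exact (Nat.add_le_lcm_of_not_dvd_s6 (hnd hxy) (hnd hxy.symm)).trans
      (Nat.le_of_dvd hL (Nat.lcm_dvd (dvd_lcm (mem_univ x)) (dvd_lcm (mem_univ y))))

theorem sum_le_lcm_or_eq_of_card_eq_three [Fintype V] (hα : WPSystem α)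
    (hnd : Pairwise fun v w => ¬ α v ∣ α w) (hcard : Fintype.card V = 3) :
    ∑ v, α v ≤ univ.lcm α ∨ univ.val.map α = {6, 10, 15} := by
  classical
  obtain ⟨i, j, hij, hi, hj⟩ := exists_max_and_max_erase α (by omega)
  have hj' : j ∈ univ.erase i := mem_erase.mpr ⟨hij.symm, mem_univ j⟩
  obtain ⟨k, hk⟩ := card_eq_one.mp (show #((univ.erase i).erase j) = 1 by
    rw [card_erase_of_mem hj', card_erase_of_mem (mem_univ i), card_univ, hcard])
  have hk' : k ∈ (univ.erase i).erase j := hk ▸ mem_singleton_self k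
  obtain ⟨hkj, hki, -⟩ := by simpa only [mem_erase] using hk'
  rcases Nat.add_add_le_or_eq_of_not_dvd hα.lcm_ne_zero (dvd_lcm (mem_univ i))
    (dvd_lcm (mem_univ j)) (dvd_lcm (mem_univ k)) (hi j) (hj k hki) (hnd hij.symm) (hnd hkj)
    (hnd hki) (hα.2 i j k hij (Ne.symm hki) (Ne.symm hkj)) with h | ⟨hi15, hj10, hk6⟩
  · left
    rwa [sum_univ_eq_add_add_sum_erase_erase α hij, hk, sum_singleton]
  · right
    rw [← insert_erase (mem_univ i), ← insert_erase hj', hk,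
      insert_val_of_notMem (by simp [hij, hki.symm]), insert_val_of_notMem (by simp [hkj.symm]),
      singleton_val, Multiset.map_cons, Multiset.map_cons, Multiset.map_singleton, hi15, hj10, hk6]
    decide

end WPSystem

theorem stmt6_general {V : Type} [Fintype V] (α : V → ℕ)
    (hWP : WPSystem α)
    (hconn : (coprimeGraph α).Connected)
    (hweak : ∀ v : V, ¬ IsWeak α v) :
    (∑ v : V, α v) - 1 ≤ Finset.univ.lcm α ∧
      (¬ (Fintype.card V = 3 ∧ Finset.univ.val.map α = ({6, 10, 15} : Multiset ℕ)) →
        ∑ v : V, α v ≤ Finset.univ.lcm α) := by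
  have hnd := hWP.pairwise_not_dvd hweak
  have key : ∑ v, α v ≤ univ.lcm α ∨
      (Fintype.card V = 3 ∧ univ.val.map α = ({6, 10, 15} : Multiset ℕ)) := by
    rcases le_or_gt (Fintype.card V) 2 with hle2 | hgt2
    · exact .inl (hWP.sum_le_lcm_of_card_le_two hnd hle2)
    rcases (Nat.succ_le_of_lt hgt2).eq_or_lt with h3 | h4
    · exact (hWP.sum_le_lcm_or_eq_of_card_eq_three hnd h3.symm).imp_right (⟨h3.symm, ·⟩)
    · exact .inl (hWP.sum_le_lcm_of_four_le_card hnd h4 hconn)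
  refine ⟨?_, key.resolve_right⟩
  rcases key with h | ⟨-, hmap⟩
  · omega
  · rw [sum_eq_multiset_sum, lcm_def, hmap]
    decide

/-- a WP-weight system on a finite nonempty set, with connected
coprimality graph and no weak vertex, satisfies `lcm ≥ Σ − 1`; moreover
`lcm ≥ Σ` unless `V` has exactly three elements with multiset of weights
`{6, 10, 15}`. -/
theorem stmt6 {V : Type} [Fintype V] [DecidableEq V] (α : V → ℕ)
    (hne : Nonempty V)
    (hWP : WPSystem α)
    (hconn : (coprimeGraph α).Connected)
    (hweak : ∀ v : V, ¬ IsWeak α v) :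
    (∑ v : V, α v) - 1 ≤ Finset.univ.lcm α ∧
      (¬ (Fintype.card V = 3 ∧ Finset.univ.val.map α = ({6, 10, 15} : Multiset ℕ)) →
        ∑ v : V, α v ≤ Finset.univ.lcm α) :=
  stmt6_general α hWP hconn hweak
end

section
/- Let α : V → ℕ be a WP-weight system on a finite set V such that no vertex of V is weak. Suppose it is not the case that V has exactly three elements with multiset of values {α(v) : v ∈ V} equal to {6, 10, 15}. Then lcm_{v ∈ V} α(v) ≥ ∑_{v ∈ V} α(v). -/
/-!
Induction on the vertex set. If some weight `α v` does not divide the lcm `L'` of the other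
weights, then `L = lcm (α v) L'` is a proper multiple of both `α v` and `L'`, hence
`α v + Σ' ≤ L / 2 + L' ≤ L` by induction (when the other weights are `6, 10, 15`, directly).

Otherwise every weight divides the lcm of the others. As a prime divides at most two weights, each
`w` then shares a factor with a vertex other than any prescribed `v`; in particular `|s| ≥ 3`.
For `|s| = 3` the weights are `xy, xz, yz` with `x, y, z ≥ 2` pairwise coprime, and
`xy + xz + yz ≤ xyz` unless `{x, y, z} = {2, 3, 5}`. For `n = |s| ≥ 4` and fixed `v`, the common
factors of each `w ≠ v` with such a neighbour are pairwise coprime, coprime to `α v`, and each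
occurs at most twice; so there are at least `(n - 1) / 2` of them, their product is at least `n`,
and `n * α v ≤ L` for every `v`.
-/

open Finset
open scoped Nat

lemma two_mul_le_of_dvd_of_ne {a m : ℕ} (h : a ∣ m) (hm : m ≠ 0) (hne : m ≠ a) :
    2 * a ≤ m := by
  obtain ⟨k, rfl⟩ := h
  have hk : 2 ≤ k :=
    (Nat.two_le_iff k).mpr ⟨by rintro rfl; simp at hm, by rintro rfl; simp at hne⟩
  simpa [Nat.mul_comm] using Nat.mul_le_mul_left a hk

lemma two_le_of_eq_mul {a x y c : ℕ} (ha : a = x * y) (ha0 : a ≠ 0) (hx : x ∣ c)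
    (hac : ¬ a ∣ c) : 2 ≤ y :=
  (Nat.two_le_iff y).mpr ⟨by rintro rfl; simp [ha] at ha0, by rintro rfl; simp_all⟩

lemma eq_gcd_mul_gcd_of_dvd_mul {a b c : ℕ} (h : a ∣ b * c)
    (hco : Nat.Coprime (Nat.gcd a b) (Nat.gcd a c)) : a = Nat.gcd a b * Nat.gcd a c :=
  Nat.dvd_antisymm ((Nat.gcd_eq_left h).symm.dvd.trans (gcd_mul_dvd_mul_gcd a b c))
    (hco.mul_dvd_of_dvd_of_dvd (Nat.gcd_dvd_left a b) (Nat.gcd_dvd_left a c))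

lemma le_five_of_mul_mul_lt {x y z : ℕ} (hy : 2 ≤ y) (hz : 2 ≤ z) (hyz : y ≠ z)
    (h : x * y * z < x * y + x * z + y * z) : x ≤ 5 := by
  by_contra! hx
  wlog hlt : y < z generalizing y z
  · exact this hz hy hyz.symm (by linarith) (by omega)
  -- `1 / z + 1 / y + 1 / x ≤ 1 / 3 + 1 / 2 + 1 / 6 = 1`
  have h1 := Nat.mul_le_mul_left (x * y) (show 3 ≤ z by omega)
  have h2 := Nat.mul_le_mul_left (x * z) hy
  have h3 := Nat.mul_le_mul_left (y * z) (show 6 ≤ x by omega)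
  linarith

lemma mul_add_mul_add_mul_le_or_eq {x y z : ℕ} (hx : 2 ≤ x) (hy : 2 ≤ y) (hz : 2 ≤ z)
    (hxy : Nat.Coprime x y) (hxz : Nat.Coprime x z) (hyz : Nat.Coprime y z) :
    x * y + x * z + y * z ≤ x * y * z ∨
      ({x * y, x * z, y * z} : Multiset ℕ) = {6, 10, 15} := by
  have hne {a b : ℕ} (ha : 2 ≤ a) (hab : Nat.Coprime a b) : a ≠ b := by
    rintro rfl; simp at hab; omega
  by_contra! h
  have hx5 := le_five_of_mul_mul_lt hy hz (hne hy hyz) h.1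
  have hy5 := le_five_of_mul_mul_lt (x := y) hx hz (hne hx hxz) (by linarith [h.1])
  have hz5 := le_five_of_mul_mul_lt (x := z) hx hy (hne hx hxy) (by linarith [h.1])
  revert h hxy hxz hyz
  interval_cases x <;> interval_cases y <;> interval_cases z <;> decide

lemma factorial_card_add_one_le_prod (T : Finset ℕ) (hT : ∀ n ∈ T, 2 ≤ n) :
    (#T + 1)! ≤ ∏ n ∈ T, n := by
  induction T using Finset.induction_on_max with
  | empty => simp
  | insert a T hlt ih =>
    have haT : a ∉ T := fun ha => (hlt a ha).ne rfl
    have hcard : #T + 2 ≤ a := by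
      have hsub : T ⊆ Icc 2 (a - 1) := fun n hn =>
        mem_Icc.mpr ⟨hT n (mem_insert_of_mem hn), by have := hlt n hn; omega⟩
      have hT' := card_le_card hsub
      rw [Nat.card_Icc] at hT'
      have := hT a (mem_insert_self a T)
      omega
    rw [card_insert_of_notMem haT, prod_insert haT, Nat.factorial_succ]
    exact Nat.mul_le_mul hcard (ih fun n hn => hT n (mem_insert_of_mem hn))

lemma card_add_one_le_prod_image {ι : Type*} (t : Finset ι) (f : ι → ℕ)
    (hf : ∀ i ∈ t, 2 ≤ f i) (hfib : ∀ n ∈ t.image f, #{i ∈ t | f i = n} ≤ 2)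
    (ht : 3 ≤ #t) :
    #t + 1 ≤ ∏ n ∈ t.image f, n := by
  have hcard : #t ≤ 2 * #(t.image f) := card_le_mul_card_image t 2 hfib
  have hfact := factorial_card_add_one_le_prod (t.image f) (by simpa using hf)
  have h2 : 2 ≤ (#(t.image f))! := by
    simpa using Nat.factorial_le (show 2 ≤ #(t.image f) by omega)
  rw [Nat.factorial_succ] at hfact
  nlinarith

/-- A WP-weight system on `s` without weak vertices: as the weights are at least `2`, a vertex `v`
is weak exactly when `α v` divides another weight. -/
structure StrongWPOn {V : Type*} (α : V → ℕ) (s : Finset V) : Prop where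
  two_le : ∀ v ∈ s, 2 ≤ α v
  coprime : ∀ a ∈ s, ∀ b ∈ s, ∀ c ∈ s, a ≠ b → a ≠ c → b ≠ c →
    Nat.Coprime (Nat.gcd (α a) (α b)) (α c)
  not_dvd : ∀ v ∈ s, ∀ w ∈ s, v ≠ w → ¬ α v ∣ α w

namespace StrongWPOn

variable {V : Type*} {α : V → ℕ} {s : Finset V}

lemma mono {t : Finset V} (h : StrongWPOn α s) (hts : t ⊆ s) : StrongWPOn α t where
  two_le v hv := h.two_le v (hts hv)
  coprime a ha b hb c hc := h.coprime a (hts ha) b (hts hb) c (hts hc)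
  not_dvd v hv w hw := h.not_dvd v (hts hv) w (hts hw)

lemma pos (h : StrongWPOn α s) {v : V} (hv : v ∈ s) : 0 < α v :=
  Nat.zero_lt_of_lt (h.two_le v hv)

lemma lcm_ne_zero (h : StrongWPOn α s) : s.lcm α ≠ 0 := by
  rw [Ne, Finset.lcm_eq_zero_iff]
  rintro ⟨v, hv, h0⟩
  exact (h.pos hv).ne' h0

lemma coprime_gcd_gcd (h : StrongWPOn α s) {a b c d : V} (ha : a ∈ s) (hb : b ∈ s)
    (hc : c ∈ s) (hd : d ∈ s) (hab : a ≠ b) (hcd : c ≠ d)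
    (hne : Nat.gcd (α a) (α b) ≠ Nat.gcd (α c) (α d)) :
    Nat.Coprime (Nat.gcd (α a) (α b)) (Nat.gcd (α c) (α d)) := by
  by_cases hc' : c ≠ a ∧ c ≠ b
  · exact (h.coprime a ha b hb c hc hab hc'.1.symm hc'.2.symm).coprime_dvd_right
      (Nat.gcd_dvd_left _ _)
  by_cases hd' : d ≠ a ∧ d ≠ b
  · exact (h.coprime a ha b hb d hd hab hd'.1.symm hd'.2.symm).coprime_dvd_right
      (Nat.gcd_dvd_right _ _)
  exfalso
  apply hne
  have hc' : c = a ∨ c = b := by tauto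
  have hd' : d = a ∨ d = b := by tauto
  rcases hc' with rfl | rfl <;> rcases hd' with rfl | rfl
  exacts [absurd rfl hcd, rfl, Nat.gcd_comm _ _, absurd rfl hcd]

lemma card_filter_eq_le_two (h : StrongWPOn α s) {f : V → ℕ} (hf : ∀ w ∈ s, f w ∣ α w)
    {n : ℕ} (hn : 2 ≤ n) : #{w ∈ s | f w = n} ≤ 2 := by
  by_contra! h3
  obtain ⟨a, ha, b, hb, c, hc, hab, hac, hbc⟩ := two_lt_card.mp h3
  simp only [mem_filter] at ha hb hc
  have := Nat.eq_one_of_dvd_coprimes (h.coprime a ha.1 b hb.1 c hc.1 hab hac hbc)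
    (Nat.dvd_gcd (ha.2 ▸ hf a ha.1) (hb.2 ▸ hf b hb.1)) (hc.2 ▸ hf c hc.1)
  omega

variable [DecidableEq V]

lemma exists_gcd_gt_one (h : StrongWPOn α s) (hsat : ∀ v ∈ s, α v ∣ (s.erase v).lcm α)
    {w v : V} (hw : w ∈ s) (hv : v ∈ s) (hwv : w ≠ v) :
    ∃ u ∈ s, u ≠ w ∧ u ≠ v ∧ 1 < Nat.gcd (α w) (α u) := by
  by_contra! hno
  have hcop : Nat.Coprime (α w) (∏ u ∈ (s.erase w).erase v, α u) := by
    refine Nat.Coprime.prod_right fun u hu => ?_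
    have hu' := mem_erase.mp (mem_of_mem_erase hu)
    exact Nat.le_antisymm (hno u hu'.2 hu'.1 (ne_of_mem_erase hu))
      (Nat.gcd_pos_of_pos_left (α u) (h.pos hw))
  have hdvd : α w ∣ α v * ∏ u ∈ (s.erase w).erase v, α u := by
    rw [mul_prod_erase _ _ (mem_erase.mpr ⟨hwv.symm, hv⟩)]
    exact (hsat w hw).trans (lcm_dvd_prod _ _)
  exact h.not_dvd w hw v hv hwv (hcop.dvd_of_dvd_mul_right hdvd)

lemma three_le_card (h : StrongWPOn α s) (hsat : ∀ v ∈ s, α v ∣ (s.erase v).lcm α)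
    (hs : s.Nonempty) : 3 ≤ #s := by
  obtain ⟨w, hw⟩ := hs
  obtain ⟨v, hv⟩ : (s.erase w).Nonempty := by
    rw [nonempty_iff_ne_empty]
    intro he
    have hw1 := hsat w hw
    rw [he, lcm_empty, Nat.dvd_one] at hw1
    have := h.two_le w hw
    omega
  obtain ⟨hvw, hv⟩ := mem_erase.mp hv
  obtain ⟨u, hu, huw, huv, -⟩ := h.exists_gcd_gt_one hsat hw hv hvw.symm
  exact two_lt_card.mpr ⟨w, hw, v, hv, u, hu, hvw.symm, huw.symm, huv.symm⟩

lemma eq_gcd_mul_gcd (h : StrongWPOn α s) (hsat : ∀ v ∈ s, α v ∣ (s.erase v).lcm α)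
    {a b c : V} (ha : a ∈ s) (hb : b ∈ s) (hc : c ∈ s)
    (hab : a ≠ b) (hac : a ≠ c) (hbc : b ≠ c)
    (hs : s ⊆ {a, b, c}) : α a = Nat.gcd (α a) (α b) * Nat.gcd (α a) (α c) := by
  have herase : s.erase a ⊆ {b, c} := fun x hx => by
    simpa [ne_of_mem_erase hx] using hs (mem_of_mem_erase hx)
  have hdvd : α a ∣ α b * α c := by
    refine (hsat a ha).trans ((lcm_dvd_prod _ _).trans ?_)
    simpa [hbc] using prod_dvd_prod_of_subset _ _ α herase
  exact eq_gcd_mul_gcd_of_dvd_mul hdvd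
    ((h.coprime a ha b hb c hc hab hac hbc).coprime_dvd_right (Nat.gcd_dvd_right _ _))

lemma sum_le_lcm_of_card_eq_three (h : StrongWPOn α s)
    (hsat : ∀ v ∈ s, α v ∣ (s.erase v).lcm α) (hcard : #s = 3)
    (hs : s.val.map α ≠ {6, 10, 15}) : ∑ v ∈ s, α v ≤ s.lcm α := by
  obtain ⟨a, b, c, hab, hac, hbc, rfl⟩ := card_eq_three.mp hcard
  have ha : a ∈ ({a, b, c} : Finset V) := by simp
  have hb : b ∈ ({a, b, c} : Finset V) := by simp
  have hc : c ∈ ({a, b, c} : Finset V) := by simp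
  have ea := h.eq_gcd_mul_gcd hsat ha hb hc hab hac hbc subset_rfl
  have eb := h.eq_gcd_mul_gcd hsat hb ha hc hab.symm hbc hac (by simp [insert_subset_iff])
  have ec := h.eq_gcd_mul_gcd hsat hc ha hb hac.symm hbc.symm hab (by simp [insert_subset_iff])
  rw [Nat.gcd_comm (α b) (α a)] at eb
  rw [Nat.gcd_comm (α c) (α a), Nat.gcd_comm (α c) (α b)] at ec
  set x := Nat.gcd (α a) (α b)
  set y := Nat.gcd (α a) (α c)
  set z := Nat.gcd (α b) (α c)
  have hxy : Nat.Coprime x y :=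
    (h.coprime a ha b hb c hc hab hac hbc).coprime_dvd_right (Nat.gcd_dvd_right _ _)
  have hxz : Nat.Coprime x z :=
    (h.coprime a ha b hb c hc hab hac hbc).coprime_dvd_right (Nat.gcd_dvd_right _ _)
  have hyz : Nat.Coprime y z :=
    (h.coprime a ha c hc b hb hac hab hbc.symm).coprime_dvd_right (Nat.gcd_dvd_left _ _)
  have hx : 2 ≤ x := two_le_of_eq_mul (ea.trans (Nat.mul_comm x y)) (h.pos ha).ne'
    (Nat.gcd_dvd_right _ _) (h.not_dvd a ha c hc hac)
  have hy : 2 ≤ y :=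
    two_le_of_eq_mul ea (h.pos ha).ne' (Nat.gcd_dvd_right _ _) (h.not_dvd a ha b hb hab)
  have hz : 2 ≤ z :=
    two_le_of_eq_mul eb (h.pos hb).ne' (Nat.gcd_dvd_left _ _) (h.not_dvd b hb a ha hab.symm)
  have hL : x * y * z ∣ ({a, b, c} : Finset V).lcm α :=
    (hxz.mul_left hyz).mul_dvd_of_dvd_of_dvd (ea ▸ dvd_lcm ha)
      ((Nat.gcd_dvd_left _ _).trans (dvd_lcm hb))
  have hsum : ∑ v ∈ ({a, b, c} : Finset V), α v = x * y + x * z + y * z := by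
    simp [hab, hac, hbc, ← ea, ← eb, ← ec, Nat.add_assoc]
  have hmap : ({a, b, c} : Finset V).val.map α = {x * y, x * z, y * z} := by
    simp [hab, hac, hbc, ← ea, ← eb, ← ec]
  rcases mul_add_mul_add_mul_le_or_eq hx hy hz hxy hxz hyz with hle | hexc
  · exact hsum ▸ hle.trans (Nat.le_of_dvd (Nat.pos_of_ne_zero h.lcm_ne_zero) hL)
  · exact absurd (hmap.trans hexc) hs

lemma card_mul_le_lcm (h : StrongWPOn α s) (hsat : ∀ v ∈ s, α v ∣ (s.erase v).lcm α)
    (hs : 4 ≤ #s) {v : V} (hv : v ∈ s) : #s * α v ≤ s.lcm α := by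
  choose! u hu using fun w (hw : w ∈ s.erase v) =>
    h.exists_gcd_gt_one hsat (mem_of_mem_erase hw) hv (ne_of_mem_erase hw)
  set f : V → ℕ := fun w => Nat.gcd (α w) (α (u w))
  have hf : ∀ w ∈ s.erase v, 2 ≤ f w := fun w hw => (hu w hw).2.2.2
  have hcard : #s ≤ ∏ n ∈ (s.erase v).image f, n := by
    rw [← card_erase_add_one hv]
    refine card_add_one_le_prod_image _ f hf (fun n hn => ?_) ?_
    · obtain ⟨w, hw, rfl⟩ := mem_image.mp hn
      exact (h.mono (erase_subset v s)).card_filter_eq_le_two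
        (fun _ _ => Nat.gcd_dvd_left _ _) (hf w hw)
    · rw [card_erase_of_mem hv]
      omega
  have hprod : ∏ n ∈ (s.erase v).image f, n ∣ s.lcm α := by
    rw [← lcm_eq_prod]
    · refine Finset.lcm_dvd fun n hn => ?_
      obtain ⟨w, hw, rfl⟩ := mem_image.mp hn
      exact (Nat.gcd_dvd_left _ _).trans (dvd_lcm (mem_of_mem_erase hw))
    · intro n hn m hm hnm
      obtain ⟨w₁, hw₁, rfl⟩ := mem_image.mp hn
      obtain ⟨w₂, hw₂, rfl⟩ := mem_image.mp hm
      exact h.coprime_gcd_gcd (mem_of_mem_erase hw₁) (hu w₁ hw₁).1 (mem_of_mem_erase hw₂)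
        (hu w₂ hw₂).1 (hu w₁ hw₁).2.1.symm (hu w₂ hw₂).2.1.symm hnm
  have hcop : Nat.Coprime (α v) (∏ n ∈ (s.erase v).image f, n) := by
    refine Nat.Coprime.prod_right fun n hn => ?_
    obtain ⟨w, hw, rfl⟩ := mem_image.mp hn
    exact (h.coprime w (mem_of_mem_erase hw) (u w) (hu w hw).1 v hv (hu w hw).2.1.symm
      (ne_of_mem_erase hw) (hu w hw).2.2.1).symm
  calc #s * α v ≤ α v * ∏ n ∈ (s.erase v).image f, n := by
        rw [Nat.mul_comm]; exact Nat.mul_le_mul_left _ hcard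
    _ ≤ s.lcm α := Nat.le_of_dvd (Nat.pos_of_ne_zero h.lcm_ne_zero)
        (hcop.mul_dvd_of_dvd_of_dvd (dvd_lcm hv) hprod)

lemma sum_le_lcm_of_four_le_card (h : StrongWPOn α s)
    (hsat : ∀ v ∈ s, α v ∣ (s.erase v).lcm α) (hs : 4 ≤ #s) :
    ∑ v ∈ s, α v ≤ s.lcm α := by
  refine Nat.le_of_mul_le_mul_left ?_ (show 0 < #s by omega)
  calc #s * ∑ v ∈ s, α v = ∑ v ∈ s, #s * α v := mul_sum _ _ _
    _ ≤ ∑ _v ∈ s, s.lcm α := sum_le_sum fun v hv => h.card_mul_le_lcm hsat hs hv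
    _ = #s * s.lcm α := by rw [sum_const, smul_eq_mul]

lemma two_mul_le_lcm_of_not_dvd (h : StrongWPOn α s) {v : V} (hv : v ∈ s)
    (hne : (s.erase v).Nonempty) (hvL : ¬ α v ∣ (s.erase v).lcm α) :
    2 * α v ≤ s.lcm α ∧ 2 * (s.erase v).lcm α ≤ s.lcm α := by
  have hL : s.lcm α = Nat.lcm (α v) ((s.erase v).lcm α) := by
    conv_lhs => rw [← insert_erase hv]
    exact lcm_insert
  refine ⟨two_mul_le_of_dvd_of_ne (dvd_lcm hv) h.lcm_ne_zero fun he => ?_,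
    two_mul_le_of_dvd_of_ne (hL ▸ Nat.dvd_lcm_right _ _) h.lcm_ne_zero fun he => ?_⟩
  · obtain ⟨w, hw⟩ := hne
    exact h.not_dvd w (mem_of_mem_erase hw) v hv (ne_of_mem_erase hw)
      ((dvd_lcm hw).trans (he ▸ hL ▸ Nat.dvd_lcm_right _ _))
  · exact hvL (he ▸ hL ▸ Nat.dvd_lcm_left _ _)

lemma sum_le_lcm_of_not_dvd (h : StrongWPOn α s) {v : V} (hv : v ∈ s)
    (hvL : ¬ α v ∣ (s.erase v).lcm α)
    (ih : (s.erase v).val.map α ≠ {6, 10, 15} →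
      ∑ w ∈ s.erase v, α w ≤ (s.erase v).lcm α) :
    ∑ w ∈ s, α w ≤ s.lcm α := by
  rw [← add_sum_erase s α hv]
  rcases (s.erase v).eq_empty_or_nonempty with he | hne
  · rw [he, sum_empty, Nat.add_zero]
    exact Nat.le_of_dvd (Nat.pos_of_ne_zero h.lcm_ne_zero) (dvd_lcm hv)
  obtain ⟨hvL2, hL'L2⟩ := h.two_mul_le_lcm_of_not_dvd hv hne hvL
  by_cases hexc : (s.erase v).val.map α = {6, 10, 15}
  · have hsum : ∑ w ∈ s.erase v, α w = 31 := by rw [sum_eq_multiset_sum, hexc]; rfl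
    have hlcm : (s.erase v).lcm α = 30 := by rw [lcm_def, hexc]; rfl
    obtain ⟨w, hw, hw6⟩ :=
      Multiset.mem_map.mp (hexc ▸ (by simp : 6 ∈ ({6, 10, 15} : Multiset ℕ)))
    have hv30 : α v ≠ 30 := fun hv30 => h.not_dvd w (mem_of_mem_erase hw) v hv
      (ne_of_mem_erase hw) (by rw [hw6, hv30]; norm_num)
    omega
  · have := ih hexc
    omega

theorem sum_le_lcm (h : StrongWPOn α s) (hs : s.val.map α ≠ {6, 10, 15}) :
    ∑ v ∈ s, α v ≤ s.lcm α := by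
  induction s using Finset.strongInduction with
  | H s ih =>
  by_cases hsat : ∀ v ∈ s, α v ∣ (s.erase v).lcm α
  · rcases s.eq_empty_or_nonempty with rfl | hne
    · simp
    rcases (h.three_le_card hsat hne).eq_or_lt with h3 | h4
    · exact h.sum_le_lcm_of_card_eq_three hsat h3.symm hs
    · exact h.sum_le_lcm_of_four_le_card hsat h4
  · push Not at hsat
    obtain ⟨v, hv, hvL⟩ := hsat
    exact h.sum_le_lcm_of_not_dvd hv hvL
      (ih _ (erase_ssubset hv) (h.mono (erase_subset v s)))

end StrongWPOn

lemma WPSystem.strongWPOn_univ {V : Type} [Fintype V] {α : V → ℕ} (hWP : WPSystem α)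
    (hweak : ∀ v, ¬ IsWeak α v) : StrongWPOn α univ where
  two_le v _ := hWP.1 v
  coprime a _ b _ c _ := hWP.2 a b c
  not_dvd v _ w _ hvw hdvd :=
    hweak v ⟨w, hvw.symm, by rw [Nat.gcd_eq_left hdvd]; exact hWP.1 v, hdvd⟩

theorem stmt7_general {V : Type} [Fintype V] (α : V → ℕ)
    (hWP : WPSystem α)
    (hweak : ∀ v : V, ¬ IsWeak α v)
    (hnot : ¬ (Fintype.card V = 3 ∧
      Finset.univ.val.map α = ({6, 10, 15} : Multiset ℕ))) :
    ∑ v : V, α v ≤ Finset.univ.lcm α := by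
  classical
  refine (hWP.strongWPOn_univ hweak).sum_le_lcm fun hexc => hnot ⟨?_, hexc⟩
  simpa using congrArg Multiset.card hexc

/-- a WP-weight system on a finite set, without weak vertices,
which is not a three-element set with multiset of weights `{6, 10, 15}`,
satisfies `lcm ≥ Σ`. -/
theorem stmt7 {V : Type} [Fintype V] [DecidableEq V] (α : V → ℕ)
    (hWP : WPSystem α)
    (hweak : ∀ v : V, ¬ IsWeak α v)
    (hnot : ¬ (Fintype.card V = 3 ∧
      Finset.univ.val.map α = ({6, 10, 15} : Multiset ℕ))) :
    ∑ v : V, α v ≤ Finset.univ.lcm α :=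
  stmt7_general α hWP hweak hnot
end

section
/- Let α : V → ℕ be a WP-weight system on a finite set V and let d₁, d₂ be positive integers such that: (a) for every v ∈ V, α(v) divides d₁ or α(v) divides d₂; and (b) for any two distinct vertices v, w ∈ V with gcd(α(v), α(w)) > 1, the number gcd(α(v), α(w)) divides both d₁ and d₂. Then V is a disjoint union V = V₁ ⊔ V₂ such that, for each i ∈ {1, 2}: the restriction of α to V_i is a WP-weight system none of whose vertices is weak (with respect to the coprimality graph induced on V_i); no connected component of the coprimality graph induced on V_i consists of exactly three vertices whose multiset of weights is {6, 10, 15}; and lcm_{v ∈ V_i} α(v) divides d_i. -/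
/-- The restriction of `α` to `S` is a WP-weight system. -/
def WPOn {V : Type} (α : V → ℕ) (S : Finset V) : Prop :=
  (∀ v ∈ S, 2 ≤ α v) ∧
    ∀ v₁ ∈ S, ∀ v₂ ∈ S, ∀ v₃ ∈ S, v₁ ≠ v₂ → v₁ ≠ v₃ → v₂ ≠ v₃ →
      Nat.gcd (Nat.gcd (α v₁) (α v₂)) (α v₃) = 1

/-- `v` is a weak vertex of the coprimality graph induced on `S`. -/
def WeakOn {V : Type} (α : V → ℕ) (S : Finset V) (v : V) : Prop :=
  ∃ w ∈ S, w ≠ v ∧ 1 < Nat.gcd (α v) (α w) ∧ α v ∣ α w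

/-- No connected component of the coprimality graph induced on `S` consists of
exactly three vertices whose multiset of weights is `{6, 10, 15}`. -/
def NoBadComponent {V : Type} (α : V → ℕ) (S : Finset V) : Prop :=
  ¬ ∃ (c : ((coprimeGraph α).induce (S : Set V)).ConnectedComponent)
      (v₁ v₂ v₃ : (S : Set V)), v₁ ≠ v₂ ∧ v₁ ≠ v₃ ∧ v₂ ≠ v₃ ∧
      c.supp = {v₁, v₂, v₃} ∧
      ({α v₁.1, α v₂.1, α v₃.1} : Multiset ℕ) = ({6, 10, 15} : Multiset ℕ)

/-!
A weak vertex `v` has a partner `w` with `α v ∣ α w`; then `gcd (α v) (α u) > 1` puts a common factor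
on `v`, `u`, `w`, so `w` is the only neighbour of `v`. Hence weak vertices hang off their partner
(or come in mutually weak pairs), and putting each of them opposite to its partner separates all weak
pairs. Condition (b) makes a weak weight divide both `d₁` and `d₂`, so it may go to either side; the
remaining vertices go to `V₁` when their weight divides `d₁`. A `{6, 10, 15}`-triangle forces
`30 ∣ d₁` and `30 ∣ d₂`, so sending weight `10` to `V₂` whenever `10 ∣ d₂` splits it.
-/

variable {V : Type} {α : V → ℕ}

/-- `WeakOn α S v` unfolds to `∃ w ∈ S, IsWeakPartner α v w`. -/
def IsWeakPartner (α : V → ℕ) (v w : V) : Prop :=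
  w ≠ v ∧ 1 < Nat.gcd (α v) (α w) ∧ α v ∣ α w

lemma IsWeakPartner.dvd_of_forall_gcd_dvd {d : ℕ}
    (hb : ∀ v w : V, v ≠ w → 1 < Nat.gcd (α v) (α w) → Nat.gcd (α v) (α w) ∣ d)
    {v w : V} (h : IsWeakPartner α v w) : α v ∣ d := by
  simpa only [Nat.gcd_eq_left h.2.2] using hb v w h.1.symm h.2.1

lemma thirty_dvd_of_triangle {d : ℕ}
    (hb : ∀ v w : V, v ≠ w → 1 < Nat.gcd (α v) (α w) → Nat.gcd (α v) (α w) ∣ d)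
    {a b c : V} (h6 : α a = 6) (h10 : α b = 10) (h15 : α c = 15) : 30 ∣ d := by
  have h2 := hb a b (by rintro rfl; omega) (by rw [h6, h10]; decide)
  have h3 := hb a c (by rintro rfl; omega) (by rw [h6, h15]; decide)
  have h5 := hb b c (by rintro rfl; omega) (by rw [h10, h15]; decide)
  rw [h6, h10] at h2
  rw [h6, h15] at h3
  rw [h10, h15] at h5
  exact (show Nat.lcm (Nat.lcm 2 3) 5 = 30 by decide) ▸ Nat.lcm_dvd (Nat.lcm_dvd h2 h3) h5

lemma noBadComponent_of_forall {S : Finset V}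
    (h : ∀ a ∈ S, ∀ b ∈ S, ∀ c ∈ S, α a = 6 → α b = 10 → α c = 15 → False) :
    NoBadComponent α S := by
  rintro ⟨-, v₁, v₂, v₃, -, -, -, -, hweights⟩
  have hmem : ∀ n ∈ ({6, 10, 15} : Multiset ℕ), ∃ x : (S : Set V), α x = n := by
    rw [← hweights]
    simp only [Multiset.insert_eq_cons, Multiset.mem_cons, Multiset.mem_singleton]
    rintro n (rfl | rfl | rfl) <;> exact ⟨_, rfl⟩
  obtain ⟨a, h6⟩ := hmem 6 (by simp)
  obtain ⟨b, h10⟩ := hmem 10 (by simp)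
  obtain ⟨c, h15⟩ := hmem 15 (by simp)
  exact h a a.2 b b.2 c c.2 h6 h10 h15

lemma exists_alternating_coloring (r : V → V → Prop) (b : V → Prop)
    (hunique : ∀ v w w', r v w → r v w' → w' = w) (hback : ∀ v w u, r v w → r w u → v = u)
    (hirrefl : ∀ v, ¬ r v v) :
    ∃ s : V → Prop, (∀ v w, r v w → (s v ↔ ¬ s w)) ∧ ∀ v, (∀ w, ¬ r v w) → (s v ↔ b v) := by
  classical
  let : LinearOrder V := linearOrderOfSTO WellOrderingRel
  -- two mutual partners are told apart by the well-order
  let s : V → Prop := fun v =>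
    if h : ∃ w, r v w then (if ∃ u, r h.choose u then v < h.choose else ¬ b h.choose) else b v
  refine ⟨s, fun v w hvw => ?_, fun v hv => by simp [s, hv]⟩
  have hv : ∃ w, r v w := ⟨w, hvw⟩
  have hchoose : hv.choose = w := hunique _ _ _ hvw hv.choose_spec
  by_cases hw : ∃ u, r w u
  · have hwv : r w v := hback v w hw.choose hvw hw.choose_spec ▸ hw.choose_spec
    have hchoose' : hw.choose = v := hunique _ _ _ hwv hw.choose_spec
    have hne : v ≠ w := fun h => hirrefl v (h ▸ hvw)
    simp only [s, dif_pos hv, dif_pos hw, hchoose, hchoose', if_pos hw, if_pos hv, not_lt]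
    exact ⟨le_of_lt, fun h => lt_of_le_of_ne h hne⟩
  · simp only [s, dif_pos hv, dif_neg hw, hchoose, if_neg hw]

namespace WPSystem

lemma wpOn (hα : WPSystem α) (S : Finset V) : WPOn α S :=
  ⟨fun v _ => hα.1 v, fun v₁ _ v₂ _ v₃ _ => hα.2 v₁ v₂ v₃⟩

lemma eq_of_isWeakPartner (hα : WPSystem α) {v w u : V} (hvw : IsWeakPartner α v w)
    (huv : u ≠ v) (hgcd : 1 < Nat.gcd (α v) (α u)) : u = w := by
  by_contra huw
  have h := hα.2 v u w huv.symm hvw.1.symm huw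
  rw [Nat.gcd_eq_left ((Nat.gcd_dvd_left _ _).trans hvw.2.2)] at h
  omega

lemma isWeakPartner_unique (hα : WPSystem α) {v w w' : V} (hw : IsWeakPartner α v w)
    (hw' : IsWeakPartner α v w') : w' = w :=
  hα.eq_of_isWeakPartner hw hw'.1 hw'.2.1

lemma eq_of_isWeakPartner_of_isWeakPartner (hα : WPSystem α) {v w u : V}
    (hvw : IsWeakPartner α v w) (hwu : IsWeakPartner α w u) : v = u :=
  hα.eq_of_isWeakPartner hwu hvw.1.symm (Nat.gcd_comm (α v) (α w) ▸ hvw.2.1)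

lemma not_isWeakPartner_of_gcd_of_gcd (hα : WPSystem α) {v u u' : V} (hu : u ≠ v) (hu' : u' ≠ v)
    (huu' : u ≠ u') (hgcd : 1 < Nat.gcd (α v) (α u)) (hgcd' : 1 < Nat.gcd (α v) (α u')) (w : V) :
    ¬ IsWeakPartner α v w := fun hw =>
  huu' ((hα.eq_of_isWeakPartner hw hu hgcd).trans (hα.eq_of_isWeakPartner hw hu' hgcd').symm)

lemma not_isWeakPartner_of_triangle (hα : WPSystem α) {a b c : V} (h6 : α a = 6) (h10 : α b = 10)
    (h15 : α c = 15) : (∀ w, ¬ IsWeakPartner α a w) ∧ ∀ w, ¬ IsWeakPartner α b w := by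
  have hab : b ≠ a := by rintro rfl; omega
  have hac : c ≠ a := by rintro rfl; omega
  have hbc : c ≠ b := by rintro rfl; omega
  exact ⟨hα.not_isWeakPartner_of_gcd_of_gcd hab hac hbc.symm
      (by rw [h6, h10]; decide) (by rw [h6, h15]; decide),
    hα.not_isWeakPartner_of_gcd_of_gcd hab.symm hbc hac.symm
      (by rw [h10, h6]; decide) (by rw [h10, h15]; decide)⟩

lemma exists_side (hα : WPSystem α) {d₁ d₂ : ℕ} (ha : ∀ v : V, α v ∣ d₁ ∨ α v ∣ d₂)
    (hb : ∀ v w : V, v ≠ w → 1 < Nat.gcd (α v) (α w) →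
      Nat.gcd (α v) (α w) ∣ d₁ ∧ Nat.gcd (α v) (α w) ∣ d₂) :
    ∃ s : V → Prop, (∀ v w, IsWeakPartner α v w → (s v ↔ ¬ s w)) ∧
      (∀ v, s v → α v ∣ d₁) ∧ (∀ v, ¬ s v → α v ∣ d₂) ∧
      ∀ a b c, α a = 6 → α b = 10 → α c = 15 → s a ∧ ¬ s b := by
  have hb₁ v w hvw hgcd := (hb v w hvw hgcd).1
  have hb₂ v w hvw hgcd := (hb v w hvw hgcd).2
  obtain ⟨s, hs_partner, hs_sink⟩ := exists_alternating_coloring (IsWeakPartner α)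
    (fun v => α v ∣ d₁ ∧ ¬ (α v = 10 ∧ α v ∣ d₂)) (fun _ _ _ => hα.isWeakPartner_unique)
    (fun _ _ _ => hα.eq_of_isWeakPartner_of_isWeakPartner) (fun _ h => h.1 rfl)
  refine ⟨s, hs_partner, fun v hv => ?_, fun v hv => ?_, fun a b c h6 h10 h15 => ?_⟩
  · by_cases hweak : ∃ w, IsWeakPartner α v w
    · exact hweak.choose_spec.dvd_of_forall_gcd_dvd hb₁
    · exact ((hs_sink v (not_exists.mp hweak)).mp hv).1
  · by_cases hweak : ∃ w, IsWeakPartner α v w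
    · exact hweak.choose_spec.dvd_of_forall_gcd_dvd hb₂
    · rw [hs_sink v (not_exists.mp hweak), not_and_or, not_not] at hv
      exact hv.elim (ha v).resolve_left And.right
  · obtain ⟨ha_sink, hb_sink⟩ := hα.not_isWeakPartner_of_triangle h6 h10 h15
    rw [hs_sink a ha_sink, hs_sink b hb_sink, h6, h10]
    exact ⟨⟨(by norm_num : 6 ∣ 30).trans (thirty_dvd_of_triangle hb₁ h6 h10 h15), by omega⟩,
      fun h => h.2 ⟨rfl, (by norm_num : 10 ∣ 30).trans (thirty_dvd_of_triangle hb₂ h6 h10 h15)⟩⟩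

lemma part_spec (hα : WPSystem α) {S : Finset V} {d : ℕ} (hdvd : ∀ v ∈ S, α v ∣ d)
    (hpartner : ∀ v ∈ S, ∀ w ∈ S, ¬ IsWeakPartner α v w)
    (htriangle : ∀ a ∈ S, ∀ b ∈ S, ∀ c ∈ S, α a = 6 → α b = 10 → α c = 15 → False) :
    WPOn α S ∧ (∀ v ∈ S, ¬ WeakOn α S v) ∧ NoBadComponent α S ∧ S.lcm α ∣ d :=
  ⟨hα.wpOn S, fun v hv ⟨w, hw, hvw⟩ => hpartner v hv w hw hvw,
    noBadComponent_of_forall htriangle, Finset.lcm_dvd hdvd⟩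

end WPSystem

theorem stmt8_general {V : Type} [Fintype V] [DecidableEq V] (α : V → ℕ)
    (hWP : WPSystem α) (d₁ d₂ : ℕ)
    (ha : ∀ v : V, α v ∣ d₁ ∨ α v ∣ d₂)
    (hb : ∀ v w : V, v ≠ w → 1 < Nat.gcd (α v) (α w) →
      Nat.gcd (α v) (α w) ∣ d₁ ∧ Nat.gcd (α v) (α w) ∣ d₂) :
    ∃ V₁ V₂ : Finset V, Disjoint V₁ V₂ ∧ V₁ ∪ V₂ = Finset.univ ∧
      (WPOn α V₁ ∧ (∀ v ∈ V₁, ¬ WeakOn α V₁ v) ∧ NoBadComponent α V₁ ∧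
        V₁.lcm α ∣ d₁) ∧
      (WPOn α V₂ ∧ (∀ v ∈ V₂, ¬ WeakOn α V₂ v) ∧ NoBadComponent α V₂ ∧
        V₂.lcm α ∣ d₂) := by
  classical
  obtain ⟨s, hs_partner, hs₁, hs₂, hs_triangle⟩ := hWP.exists_side ha hb
  refine ⟨Finset.univ.filter s, Finset.univ.filter (¬ s ·), Finset.disjoint_filter_filter_not _ _ _,
    Finset.filter_union_filter_not_eq _ _, hWP.part_spec ?_ ?_ ?_, hWP.part_spec ?_ ?_ ?_⟩ <;>
    simp only [Finset.mem_filter, Finset.mem_univ, true_and]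
  · exact hs₁
  · exact fun v hv w hw hvw => (hs_partner v w hvw).mp hv hw
  · exact fun a _ b hb c _ h6 h10 h15 => (hs_triangle a b c h6 h10 h15).2 hb
  · exact hs₂
  · exact fun v hv w hw hvw => hv ((hs_partner v w hvw).mpr hw)
  · exact fun a ha b _ c _ h6 h10 h15 => ha (hs_triangle a b c h6 h10 h15).1

/-- a WCI-graph of codimension `2` and bidegree `(d₁, d₂)` splits
into two parts `V₁ ⊔ V₂` such that each part carries a WP-weight system with no
weak vertices, no connected component of the induced coprimality graph is a
`{6, 10, 15}`-triangle, and `lcm` of the weights on `Vᵢ` divides `dᵢ`. -/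
theorem stmt8 {V : Type} [Fintype V] [DecidableEq V] (α : V → ℕ)
    (hWP : WPSystem α) (d₁ d₂ : ℕ) (hd₁ : 0 < d₁) (hd₂ : 0 < d₂)
    (ha : ∀ v : V, α v ∣ d₁ ∨ α v ∣ d₂)
    (hb : ∀ v w : V, v ≠ w → 1 < Nat.gcd (α v) (α w) →
      Nat.gcd (α v) (α w) ∣ d₁ ∧ Nat.gcd (α v) (α w) ∣ d₂) :
    ∃ V₁ V₂ : Finset V, Disjoint V₁ V₂ ∧ V₁ ∪ V₂ = Finset.univ ∧
      (WPOn α V₁ ∧ (∀ v ∈ V₁, ¬ WeakOn α V₁ v) ∧ NoBadComponent α V₁ ∧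
        V₁.lcm α ∣ d₁) ∧
      (WPOn α V₂ ∧ (∀ v ∈ V₂, ¬ WeakOn α V₂ v) ∧ NoBadComponent α V₂ ∧
        V₂.lcm α ∣ d₂) :=
  stmt8_general α hWP d₁ d₂ ha hb
end

section
/- Let α : V → ℕ be a WP-weight system on a finite set V and let d₁, d₂ be positive integers such that: (a) for every v ∈ V, α(v) divides d₁ or α(v) divides d₂; and (b) for any two distinct vertices v, w ∈ V with gcd(α(v), α(w)) > 1, the number gcd(α(v), α(w)) divides both d₁ and d₂. Then V is a disjoint union V = V₁ ⊔ V₂ such that ∑_{v ∈ V₁} α(v) ≤ d₁ and ∑_{v ∈ V₂} α(v) ≤ d₂. -/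
/-!
For a vertex `v`, the WP condition makes the numbers `gcd (α v) (α u)`, `u ≠ v`, pairwise
coprime, so their product divides `α v`. If `α v` divides the lcm of the other weights, it is
that product, hence divides both `d₁` and `d₂` by (b): such a vertex may go into either part,
and a max-cut argument places each of them so that some neighbour in the coprimality graph lies
in the other part. Every other vertex goes to a part whose degree its weight divides, by (a).
Then within each part no weight divides the lcm of the others, and for such a family the sum is
at most the lcm, because `lcm a b ≥ 2a, 2b` when neither of `a, b` divides the other. Finally
the lcm of a part divides its degree.
-/

open Finset

namespace Nat

theorem two_mul_le_of_dvd_of_ne_s9 {a b : ℕ} (hab : a ∣ b) (hne : a ≠ b) (hb : 0 < b) :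
    2 * a ≤ b := by
  by_contra! h
  exact hne (Nat.eq_of_dvd_of_lt_two_mul hb.ne' hab h).symm

theorem gcd_finset_lcm_dvd_prod_gcd {ι : Type*} (a : ℕ) (s : Finset ι) (f : ι → ℕ) :
    gcd a (s.lcm f) ∣ ∏ i ∈ s, gcd a (f i) := by
  classical
  induction s using Finset.induction_on with
  | empty => simp
  | insert i s hi ih =>
    rw [Finset.lcm_insert, Finset.prod_insert hi]
    calc gcd a (GCDMonoid.lcm (f i) (s.lcm f)) ∣ gcd a (f i * s.lcm f) :=
          gcd_dvd_gcd_of_dvd_right _ (lcm_dvd_mul _ _)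
      _ ∣ gcd a (f i) * gcd a (s.lcm f) := gcd_mul_dvd_mul_gcd _ _ _
      _ ∣ gcd a (f i) * ∏ j ∈ s, gcd a (f j) := mul_dvd_mul_left _ ih

theorem dvd_prod_gcd_of_dvd_finset_lcm {ι : Type*} {a : ℕ} {s : Finset ι} {f : ι → ℕ}
    (h : a ∣ s.lcm f) : a ∣ ∏ i ∈ s, gcd a (f i) :=
  (dvd_of_eq (Nat.gcd_eq_left h).symm).trans (gcd_finset_lcm_dvd_prod_gcd a s f)

theorem exists_one_lt_gcd_of_dvd_finset_lcm {ι : Type*} {a : ℕ} (ha : 1 < a) {s : Finset ι}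
    {f : ι → ℕ} (h : a ∣ s.lcm f) : ∃ i ∈ s, 1 < gcd a (f i) := by
  by_contra! hs
  have hprod : ∏ i ∈ s, gcd a (f i) = 1 :=
    prod_eq_one fun i hi => le_antisymm (hs i hi) (gcd_pos_of_pos_left _ (by omega))
  have := Nat.le_of_dvd one_pos (hprod ▸ dvd_prod_gcd_of_dvd_finset_lcm h)
  omega

end Nat

theorem Finset.sum_le_lcm_of_forall_not_dvd_lcm_erase {ι : Type*} [DecidableEq ι] {f : ι → ℕ}
    (s : Finset ι) (hpos : ∀ i ∈ s, 0 < f i) (h : ∀ i ∈ s, ¬ f i ∣ (s.erase i).lcm f) :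
    ∑ i ∈ s, f i ≤ s.lcm f := by
  induction s using Finset.induction_on with
  | empty => simp
  | insert a s ha ih =>
    have hsum : ∑ i ∈ s, f i ≤ s.lcm f :=
      ih (fun i hi => hpos i (mem_insert_of_mem hi)) fun i hi hdvd =>
        h i (mem_insert_of_mem hi)
          (hdvd.trans (lcm_mono (erase_subset_erase _ (subset_insert _ _))))
    have haN : ¬ f a ∣ s.lcm f := by
      simpa [erase_insert ha] using h a (mem_insert_self _ _)
    have hL : 0 < (insert a s).lcm f := by
      rw [Nat.pos_iff_ne_zero, Ne, lcm_eq_zero_iff]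
      rintro ⟨i, hi, hfi⟩
      exact (hpos i hi).ne' hfi
    rw [lcm_insert] at hL ⊢
    rw [sum_insert ha]
    obtain rfl | ⟨v, hv⟩ := s.eq_empty_or_nonempty
    · simp
    have hva : v ≠ a := ne_of_mem_of_not_mem hv ha
    have hNa : ¬ s.lcm f ∣ f a := fun hdvd => h v (mem_insert_of_mem hv) <|
      (dvd_lcm hv).trans (hdvd.trans (dvd_lcm (mem_erase.2 ⟨hva.symm, mem_insert_self _ _⟩)))
    have ha2 := Nat.two_mul_le_of_dvd_of_ne_s9 (dvd_lcm_left (f a) (s.lcm f))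
      (fun he => hNa (he ▸ dvd_lcm_right _ _)) hL
    have hN2 := Nat.two_mul_le_of_dvd_of_ne_s9 (dvd_lcm_right (f a) (s.lcm f))
      (fun he => haN (he ▸ dvd_lcm_left _ _)) hL
    omega

theorem SimpleGraph.exists_bool_coloring_forall_exists_adj_ne {V : Type*} [Finite V]
    (G : SimpleGraph V) (T : Set V) (hT : ∀ v ∈ T, ∃ w, G.Adj v w) (c₀ : V → Bool) :
    ∃ c : V → Bool, (∀ v ∉ T, c v = c₀ v) ∧ ∀ v ∈ T, ∃ w, G.Adj v w ∧ c w ≠ c v := by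
  classical
  let cut (c : V → Bool) : Set (V × V) := {p | G.Adj p.1 p.2 ∧ c p.1 ≠ c p.2}
  obtain ⟨c, hc, hmax⟩ := Set.exists_max_image {c : V → Bool | ∀ v ∉ T, c v = c₀ v}
    (fun c => (cut c).ncard) (Set.toFinite _) ⟨c₀, fun _ _ => rfl⟩
  refine ⟨c, hc, fun v hv => ?_⟩
  by_contra! hmono
  obtain ⟨w, hvw⟩ := hT v hv
  let c' := Function.update c v (!c v)
  have hc' : ∀ u ∉ T, c' u = c₀ u := fun u hu =>
    (Function.update_of_ne (ne_of_mem_of_not_mem hv hu).symm _ _).trans (hc u hu)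
  have hcut : cut c ⊂ cut c' := by
    refine (Set.ssubset_iff_of_subset ?_).2 ⟨(v, w), ?_, ?_⟩
    · rintro ⟨x, y⟩ ⟨hxy, hne⟩
      have hx : x ≠ v := by rintro rfl; exact hne (hmono y hxy).symm
      have hy : y ≠ v := by rintro rfl; exact hne (hmono x hxy.symm)
      simpa [cut, c', hx, hy] using ⟨hxy, hne⟩
    · simp [cut, c', hvw, hvw.ne', hmono w hvw]
    · simp [cut, hmono w hvw]
  exact (Set.ncard_lt_ncard hcut).not_ge (hmax c' hc')

namespace WPSystem

variable {V : Type} {α : V → ℕ}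

theorem pos (hα : WPSystem α) (v : V) : 0 < α v :=
  lt_of_lt_of_le two_pos (hα.1 v)

theorem coprime_gcd_gcd (hα : WPSystem α) {v w u : V} (hw : w ≠ v) (hu : u ≠ v) (hwu : w ≠ u) :
    Nat.Coprime (Nat.gcd (α v) (α w)) (Nat.gcd (α v) (α u)) :=
  Nat.Coprime.coprime_dvd_right (Nat.gcd_dvd_right _ _) (hα.2 v w u hw.symm hu.symm hwu)

theorem prod_gcd_dvd (hα : WPSystem α) {v : V} {s : Finset V} (hv : v ∉ s) {m : ℕ}
    (hm : ∀ u ∈ s, Nat.gcd (α v) (α u) ∣ m) : ∏ u ∈ s, Nat.gcd (α v) (α u) ∣ m := by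
  rw [← Finset.lcm_eq_prod]
  · exact Finset.lcm_dvd hm
  · intro w hw u hu hwu
    exact hα.coprime_gcd_gcd (ne_of_mem_of_not_mem hw hv) (ne_of_mem_of_not_mem hu hv) hwu

theorem dvd_of_dvd_lcm (hα : WPSystem α) {v : V} {s : Finset V} (hv : v ∉ s)
    (hs : α v ∣ s.lcm α) {m : ℕ}
    (hm : ∀ u ∈ s, 1 < Nat.gcd (α v) (α u) → Nat.gcd (α v) (α u) ∣ m) : α v ∣ m := by
  refine (Nat.dvd_prod_gcd_of_dvd_finset_lcm hs).trans (hα.prod_gcd_dvd hv fun u hu => ?_)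
  by_cases hg : 1 < Nat.gcd (α v) (α u)
  · exact hm u hu hg
  · have := Nat.gcd_pos_of_pos_left (α u) (hα.pos v)
    rw [show Nat.gcd (α v) (α u) = 1 by omega]
    exact one_dvd m

theorem mem_of_dvd_lcm (hα : WPSystem α) {v w : V} {s : Finset V} (hv : v ∉ s)
    (hs : α v ∣ s.lcm α) (hwv : w ≠ v) (hw : 1 < Nat.gcd (α v) (α w)) : w ∈ s := by
  classical
  by_contra hws
  have hprod : Nat.gcd (α v) (α w) * ∏ u ∈ s, Nat.gcd (α v) (α u) ∣
      ∏ u ∈ s, Nat.gcd (α v) (α u) := by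
    rw [← prod_insert (f := fun u => Nat.gcd (α v) (α u)) hws]
    exact (hα.prod_gcd_dvd (by simp [hwv.symm, hv]) fun u _ => Nat.gcd_dvd_left _ _).trans
      (Nat.dvd_prod_gcd_of_dvd_finset_lcm hs)
  have hpos : 0 < ∏ u ∈ s, Nat.gcd (α v) (α u) :=
    prod_pos fun u _ => Nat.gcd_pos_of_pos_left _ (hα.pos v)
  have := Nat.le_of_dvd hpos hprod
  nlinarith

theorem sum_le_of_forall_dvd [Fintype V] [DecidableEq V] (hα : WPSystem α) {s : Finset V}
    (hs : ∀ v ∈ s, α v ∣ (univ.erase v).lcm α → ∃ w ∉ s, (coprimeGraph α).Adj v w)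
    {d : ℕ} (hd : 0 < d) (hdvd : ∀ v ∈ s, α v ∣ d) : ∑ v ∈ s, α v ≤ d := by
  refine (sum_le_lcm_of_forall_not_dvd_lcm_erase s (fun v _ => hα.pos v) fun v hv hv' => ?_).trans
    (Nat.le_of_dvd hd (Finset.lcm_dvd hdvd))
  obtain ⟨w, hws, hvw⟩ := hs v hv (hv'.trans (lcm_mono (erase_subset_erase v (subset_univ s))))
  exact hws (mem_of_mem_erase (hα.mem_of_dvd_lcm (notMem_erase v s) hv' hvw.1.symm hvw.2))

end WPSystem

/-- a WCI-graph of codimension `2` and bidegree `(d₁, d₂)` splits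
into two parts `V₁ ⊔ V₂` with `Σ_{V₁} α ≤ d₁` and `Σ_{V₂} α ≤ d₂`. -/
theorem stmt9 {V : Type} [Fintype V] [DecidableEq V] (α : V → ℕ)
    (hWP : WPSystem α) (d₁ d₂ : ℕ) (hd₁ : 0 < d₁) (hd₂ : 0 < d₂)
    (ha : ∀ v : V, α v ∣ d₁ ∨ α v ∣ d₂)
    (hb : ∀ v w : V, v ≠ w → 1 < Nat.gcd (α v) (α w) →
      Nat.gcd (α v) (α w) ∣ d₁ ∧ Nat.gcd (α v) (α w) ∣ d₂) :
    ∃ V₁ V₂ : Finset V, Disjoint V₁ V₂ ∧ V₁ ∪ V₂ = Finset.univ ∧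
      (∑ v ∈ V₁, α v) ≤ d₁ ∧ (∑ v ∈ V₂, α v) ≤ d₂ := by
  let T : Set V := {v | α v ∣ (univ.erase v).lcm α}
  have hT_adj (v : V) (hv : v ∈ T) : ∃ w, (coprimeGraph α).Adj v w := by
    obtain ⟨w, hw, hgcd⟩ := Nat.exists_one_lt_gcd_of_dvd_finset_lcm (hWP.1 v) hv
    exact ⟨w, (ne_of_mem_erase hw).symm, hgcd⟩
  have hT_dvd (v : V) (hv : v ∈ T) (m : ℕ)
      (hm : ∀ u, v ≠ u → 1 < Nat.gcd (α v) (α u) → Nat.gcd (α v) (α u) ∣ m) : α v ∣ m :=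
    hWP.dvd_of_dvd_lcm (notMem_erase v _) hv fun u hu => hm u (ne_of_mem_erase hu).symm
  obtain ⟨c, hc₀, hcT⟩ := (coprimeGraph α).exists_bool_coloring_forall_exists_adj_ne T hT_adj
    fun v => decide (α v ∣ d₁)
  have hparts (b : Bool) (v : V) (hv : v ∈ univ.filter (c · = b)) (hvT : v ∈ T) :
      ∃ w ∉ univ.filter (c · = b), (coprimeGraph α).Adj v w := by
    obtain ⟨w, hvw, hcw⟩ := hcT v hvT
    exact ⟨w, by simp_all, hvw⟩
  refine ⟨univ.filter (c · = true), univ.filter (c · = false), disjoint_filter.2 (by simp),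
    by ext; simp, hWP.sum_le_of_forall_dvd (hparts true) hd₁ fun v hv => ?_,
    hWP.sum_le_of_forall_dvd (hparts false) hd₂ fun v hv => ?_⟩
  · by_cases hvT : v ∈ T
    · exact hT_dvd v hvT d₁ fun u hvu hg => (hb v u hvu hg).1
    · simpa [(mem_filter.1 hv).2] using (hc₀ v hvT).symm
  · by_cases hvT : v ∈ T
    · exact hT_dvd v hvT d₂ fun u hvu hg => (hb v u hvu hg).2
    · exact (ha v).resolve_left (by simpa [(mem_filter.1 hv).2] using (hc₀ v hvT).symm)
end

section
/- Let a_0, …, a_n and d be positive integers such that: (1) for any two distinct indices i, j with a_i > 1 and a_j > 1, gcd(a_i, a_j) = 1; (2) for every index i with a_i > 1, a_i divides d; and (3) a_0 + a_1 + … + a_n > d. Then there is a partition {0, 1, …, n} = S₀ ⊔ S₁ into disjoint subsets such that ∑_{j ∈ S₁} a_j = d, S₀ is nonempty, and a_j = 1 for every j ∈ S₀. -/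
/-! The weights `aᵢ > 1` are pairwise coprime divisors of `d`, so their product divides `d`;
since each is at least `2`, their sum is at most their product, hence at most `d`. All other
weights are `0` or `1`, and because the total exceeds `d` there are more than enough `1`s to
make up the difference: leaving out exactly `∑ aᵢ - d` of them gives `S₀`. -/

open Finset Function

theorem Finset.sum_le_prod_of_two_le {ι R : Type*} [CommSemiring R] [LinearOrder R]
    [IsStrictOrderedRing R] {s : Finset ι} {f : ι → R} (hf : ∀ i ∈ s, 2 ≤ f i) :
    ∑ i ∈ s, f i ≤ ∏ i ∈ s, f i := by
  classical
  induction s using Finset.induction_on with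
  | empty => simp
  | insert i s hi ih =>
    rw [sum_insert hi, prod_insert hi]
    have ih := ih fun j hj ↦ hf j (mem_insert_of_mem hj)
    rcases s.eq_empty_or_nonempty with rfl | ⟨j, hj⟩
    · simp
    have hprod : 2 ≤ ∏ k ∈ s, f k :=
      (hf j (mem_insert_of_mem hj)).trans <|
        (single_le_sum (fun k _ ↦ zero_le_two.trans (hf k (mem_insert_of_mem ‹_›))) hj).trans ih
    calc f i + ∑ k ∈ s, f k ≤ f i + ∏ k ∈ s, f k := by gcongr
      _ ≤ f i * ∏ k ∈ s, f k := add_le_mul (hf i (mem_insert_self i s)) hprod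

theorem Nat.prod_dvd_of_coprime {ι : Type*} {s : Finset ι} {f : ι → ℕ} {d : ℕ}
    (hs : (s : Set ι).Pairwise (Nat.Coprime on f)) (hd : ∀ i ∈ s, f i ∣ d) :
    ∏ i ∈ s, f i ∣ d := by
  have : ∏ i ∈ s, (f i : ℤ) ∣ d :=
    Finset.prod_dvd_of_coprime (hs.imp fun _ _ ↦ Nat.isCoprime_iff_coprime.2)
      fun i hi ↦ Int.natCast_dvd_natCast.2 (hd i hi)
  exact_mod_cast this

theorem Nat.sum_le_of_pairwise_coprime_of_dvd {ι : Type*} {s : Finset ι} {f : ι → ℕ} {d : ℕ}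
    (hd : 0 < d) (hf : ∀ i ∈ s, 2 ≤ f i) (hs : (s : Set ι).Pairwise (Nat.Coprime on f))
    (hdvd : ∀ i ∈ s, f i ∣ d) : ∑ i ∈ s, f i ≤ d :=
  (sum_le_prod_of_two_le hf).trans (Nat.le_of_dvd hd (Nat.prod_dvd_of_coprime hs hdvd))

theorem Finset.sum_filter_ne_one_eq_sum_filter_one_lt {ι : Type*} (s : Finset ι) (f : ι → ℕ) :
    ∑ i ∈ s with f i ≠ 1, f i = ∑ i ∈ s with 1 < f i, f i := by
  rw [← sum_filter_ne_zero, filter_filter]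
  exact sum_congr (filter_congr fun i _ ↦ by omega) fun _ _ ↦ rfl

theorem exists_partition_sum_eq_of_sum_filter_ne_one_le {ι : Type*} [Fintype ι] [DecidableEq ι]
    (f : ι → ℕ) {d : ℕ} (hle : ∑ i with f i ≠ 1, f i ≤ d) (hlt : d < ∑ i, f i) :
    ∃ S₀ S₁ : Finset ι, Disjoint S₀ S₁ ∧ S₀ ∪ S₁ = univ ∧ ∑ j ∈ S₁, f j = d ∧
      S₀.Nonempty ∧ ∀ j ∈ S₀, f j = 1 := by
  set T : Finset ι := {i | f i ≠ 1}
  have hTc : ∀ j ∈ Tᶜ, f j = 1 := by simp [T]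
  have hsplit : ∑ i ∈ T, f i + #Tᶜ = ∑ i, f i := by
    rw [← sum_add_sum_compl T f, sum_const_nat hTc, mul_one]
  obtain ⟨S₀, hS₀, hcard⟩ := exists_subset_card_eq (s := Tᶜ) (n := ∑ i, f i - d) (by omega)
  have hone : ∀ j ∈ S₀, f j = 1 := fun j hj ↦ hTc j (hS₀ hj)
  refine ⟨S₀, S₀ᶜ, disjoint_compl_right, union_compl S₀, ?_, card_pos.1 (by omega), hone⟩
  have := sum_compl_add_sum S₀ f
  rw [sum_const_nat hone] at this
  omega

theorem stmt11_general (n : ℕ) (a : Fin (n + 1) → ℕ) (d : ℕ)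
    (hd : 0 < d)
    (h1 : ∀ i j : Fin (n + 1), i ≠ j → 1 < a i → 1 < a j →
      Nat.gcd (a i) (a j) = 1)
    (h2 : ∀ i, 1 < a i → a i ∣ d)
    (h3 : d < ∑ i, a i) :
    ∃ S₀ S₁ : Finset (Fin (n + 1)),
      Disjoint S₀ S₁ ∧ S₀ ∪ S₁ = Finset.univ ∧
      (∑ j ∈ S₁, a j) = d ∧
      S₀.Nonempty ∧ ∀ j ∈ S₀, a j = 1 := by
  have hle : ∑ i with a i ≠ 1, a i ≤ d := by
    rw [sum_filter_ne_one_eq_sum_filter_one_lt]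
    exact Nat.sum_le_of_pairwise_coprime_of_dvd hd (fun i hi ↦ (mem_filter.1 hi).2)
      (fun i hi j hj hij ↦ h1 i j hij (mem_filter.1 hi).2 (mem_filter.1 hj).2)
      fun i hi ↦ h2 i (mem_filter.1 hi).2
  exact exists_partition_sum_eq_of_sum_filter_ne_one_le a hle h3

/-- arithmetic core of the hypersurface case. Given positive
integers `a₀, …, aₙ, d` with (1) nontrivial weights pairwise coprime, (2) every
`aᵢ > 1` dividing `d`, and (3) `Σ aᵢ > d`, there is a nice nef partition
`S₀ ⊔ S₁`. -/
theorem stmt11 (n : ℕ) (a : Fin (n + 1) → ℕ) (d : ℕ)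
    (hapos : ∀ i, 0 < a i) (hd : 0 < d)
    (h1 : ∀ i j : Fin (n + 1), i ≠ j → 1 < a i → 1 < a j →
      Nat.gcd (a i) (a j) = 1)
    (h2 : ∀ i, 1 < a i → a i ∣ d)
    (h3 : d < ∑ i, a i) :
    ∃ S₀ S₁ : Finset (Fin (n + 1)),
      Disjoint S₀ S₁ ∧ S₀ ∪ S₁ = Finset.univ ∧
      (∑ j ∈ S₁, a j) = d ∧
      S₀.Nonempty ∧ ∀ j ∈ S₀, a j = 1 :=
  stmt11_general n a d hd h1 h2 h3
end

section
/- Let a_0, …, a_n and d₁, d₂ be positive integers such that: (1) for any three distinct indices i₁, i₂, i₃, gcd(a_{i₁}, a_{i₂}, a_{i₃}) = 1; (2) for every index i with a_i > 1, a_i divides d₁ or a_i divides d₂; (3) for any two distinct indices i, j with gcd(a_i, a_j) > 1, the number gcd(a_i, a_j) divides both d₁ and d₂; and (4) a_0 + a_1 + … + a_n > d₁ + d₂. Then the number of indices i ∈ {0, …, n} with a_i = 1 is at least (a_0 + a_1 + … + a_n) − d₁ − d₂. -/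
/-!
Colour every weight `a i > 1` by a degree it divides, choosing among such colourings one that
maximises the number of pairs with `gcd (a i) (a j) > 1` and different colours. Thanks to the
triple gcd condition, the gcds of `a i` with the other weights of its colour class are pairwise
coprime divisors of `a i`; maximality forbids their product to be all of `a i`, since otherwise
`i` could be recoloured. So each `a i` keeps a private factor `≥ 2` inside its class, which forces
the weights of a class to sum to at most its degree. Hence the weights `> 1` sum to at most
`d₁ + d₂`, and the unit weights make up the rest of `∑ a i`.
-/

open Finset

theorem Nat.mul_dvd_lcm_of_mul_gcd_dvd {u x y : ℕ} (h : u * Nat.gcd x y ∣ x) :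
    u * y ∣ Nat.lcm x y := by
  by_cases hg : Nat.gcd x y = 0
  · obtain ⟨rfl, rfl⟩ := Nat.gcd_eq_zero_iff.mp hg
    simp
  refine (mul_dvd_mul_iff_left hg).mp ?_
  calc Nat.gcd x y * (u * y) = u * Nat.gcd x y * y := by ring
    _ ∣ x * y := mul_dvd_mul_right h y
    _ = Nat.gcd x y * Nat.lcm x y := (Nat.gcd_mul_lcm x y).symm

theorem Nat.exists_two_le_mul_dvd_of_dvd_of_ne {v x : ℕ} (hx : 0 < x) (hvx : v ∣ x)
    (hne : v ≠ x) : ∃ u, 2 ≤ u ∧ u * v ∣ x := by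
  obtain ⟨u, rfl⟩ := hvx
  refine ⟨u, ?_, by rw [mul_comm]⟩
  rcases u with _ | _ | u
  · simp at hx
  · simp at hne
  · omega

variable {ι κ : Type*}

def TripleCoprime (a : ι → ℕ) : Prop :=
  ∀ i j k, i ≠ j → i ≠ k → j ≠ k → Nat.gcd (Nat.gcd (a i) (a j)) (a k) = 1

def gcdProd [DecidableEq ι] (a : ι → ℕ) (T : Finset ι) (i : ι) : ℕ :=
  ∏ j ∈ T.erase i, Nat.gcd (a i) (a j)

namespace TripleCoprime

variable {a : ι → ℕ}

theorem coprime_gcd_gcd (h : TripleCoprime a) {i j k : ι} (hij : i ≠ j) (hik : i ≠ k)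
    (hjk : j ≠ k) : Nat.Coprime (Nat.gcd (a i) (a j)) (Nat.gcd (a i) (a k)) :=
  Nat.Coprime.coprime_dvd_right (Nat.gcd_dvd_right _ _) (h i j k hij hik hjk)

theorem coprime_gcd_prod (h : TripleCoprime a) {i j : ι} {U : Finset ι} (hij : i ≠ j)
    (hi : i ∉ U) (hj : j ∉ U) :
    Nat.Coprime (Nat.gcd (a i) (a j)) (∏ k ∈ U, Nat.gcd (a i) (a k)) :=
  Nat.Coprime.prod_right fun _ hk =>
    h.coprime_gcd_gcd hij (ne_of_mem_of_not_mem hk hi).symm (ne_of_mem_of_not_mem hk hj).symm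

variable [DecidableEq ι]

theorem prod_gcd_dvd (h : TripleCoprime a) {i : ι} {U : Finset ι} (hi : i ∉ U) {m : ℕ}
    (hm : ∀ k ∈ U, Nat.gcd (a i) (a k) ∣ m) : ∏ k ∈ U, Nat.gcd (a i) (a k) ∣ m := by
  induction U using Finset.induction_on with
  | empty => simp
  | insert k U hk ih =>
    rw [prod_insert hk]
    have hiU : i ∉ U := fun hiU => hi (mem_insert_of_mem hiU)
    have hik : i ≠ k := (ne_of_mem_of_not_mem (mem_insert_self k U) hi).symm
    exact (h.coprime_gcd_prod hik hiU hk).mul_dvd_of_dvd_of_dvd (hm k (mem_insert_self k U))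
      (ih hiU fun k' hk' => hm k' (mem_insert_of_mem hk'))

theorem gcdProd_dvd (h : TripleCoprime a) (T : Finset ι) (i : ι) : gcdProd a T i ∣ a i :=
  h.prod_gcd_dvd (notMem_erase i T) fun _ _ => Nat.gcd_dvd_left _ _

end TripleCoprime

section SumBound

variable [DecidableEq ι] {a : ι → ℕ} {T : Finset ι}

theorem gcdProd_dvd_gcdProd_of_subset {S : Finset ι} (hST : S ⊆ T) (i : ι) :
    gcdProd a S i ∣ gcdProd a T i :=
  prod_dvd_prod_of_subset _ _ _ (erase_subset_erase i hST)

theorem mul_dvd_of_mul_gcdProd_dvd {N : ℕ} (hdvd : ∀ i ∈ T, a i ∣ N) {i j : ι} (hi : i ∈ T)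
    (hj : j ∈ T.erase i) {u : ℕ} (hu : u * gcdProd a T i ∣ a i) : u * a j ∣ N :=
  (Nat.mul_dvd_lcm_of_mul_gcd_dvd ((mul_dvd_mul_left u (dvd_prod_of_mem _ hj)).trans hu)).trans
    (Nat.lcm_dvd (hdvd i hi) (hdvd j (mem_of_mem_erase hj)))

/-- Removing `i` with cofactor `u ≥ 2` leaves weights dividing `N / u`, and any other member `j`
bounds `a i` by `N / 2`; induction on `T` then gives `∑ a ≤ N / 2 + N / 2`. -/
theorem sum_le_of_forall_mul_gcdProd_dvd {N : ℕ} (hN : 0 < N) (hdvd : ∀ i ∈ T, a i ∣ N)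
    (hcofactor : ∀ i ∈ T, ∃ u, 2 ≤ u ∧ u * gcdProd a T i ∣ a i) : ∑ i ∈ T, a i ≤ N := by
  induction T using Finset.strongInduction generalizing N with
  | H T ih =>
  obtain rfl | ⟨i, hi⟩ := T.eq_empty_or_nonempty
  · simp
  rw [← add_sum_erase T a hi]
  obtain hsingle | ⟨j, hj⟩ := (T.erase i).eq_empty_or_nonempty
  · simpa [hsingle] using Nat.le_of_dvd hN (hdvd i hi)
  obtain ⟨u, hu, hui⟩ := hcofactor i hi
  have huN : u ∣ N := (dvd_mul_right u _).trans (hui.trans (hdvd i hi))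
  have hrest : ∑ k ∈ T.erase i, a k ≤ N / u := by
    refine ih _ (erase_ssubset hi) (Nat.div_pos (Nat.le_of_dvd hN huN) (by omega))
      (fun k hk => (Nat.dvd_div_iff_mul_dvd huN).mpr (mul_dvd_of_mul_gcdProd_dvd hdvd hi hk hui))
      fun k hk => ?_
    obtain ⟨v, hv, hvk⟩ := hcofactor k (mem_of_mem_erase hk)
    exact ⟨v, hv, (mul_dvd_mul_left v
      (gcdProd_dvd_gcdProd_of_subset (erase_subset i T) k)).trans hvk⟩
  have hai : 2 * a i ≤ N := by
    have hjT := mem_of_mem_erase hj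
    obtain ⟨v, hv, hvj⟩ := hcofactor j hjT
    have hij : i ∈ T.erase j := mem_erase.mpr ⟨(ne_of_mem_erase hj).symm, hi⟩
    calc 2 * a i ≤ v * a i := Nat.mul_le_mul_right _ hv
      _ ≤ N := Nat.le_of_dvd hN (mul_dvd_of_mul_gcdProd_dvd hdvd hjT hij hvj)
  have hNu : N / u ≤ N / 2 := Nat.div_le_div_left hu (by norm_num)
  omega

end SumBound

section Coloring

variable [Fintype ι] [DecidableEq ι] [DecidableEq κ] (a : ι → ℕ)

def IsAdmissibleColoring (d : κ → ℕ) (c : ι → κ) : Prop :=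
  ∀ i, 1 < a i → a i ∣ d (c i)

def cutSize (c : ι → κ) : ℕ :=
  #{p : ι × ι | 1 < Nat.gcd (a p.1) (a p.2) ∧ c p.1 ≠ c p.2}

variable {a}

theorem cutSize_lt_cutSize_update {c : ι → κ} {i j : ι} {t : κ} (ht : t ≠ c i) (hji : j ≠ i)
    (hj : 1 < Nat.gcd (a i) (a j)) (hpartner : ∀ k, 1 < Nat.gcd (a i) (a k) → c k = c i) :
    cutSize a c < cutSize a (Function.update c i t) := by
  refine card_lt_card ((ssubset_iff_of_subset ?_).mpr ⟨(i, j), ?_, ?_⟩)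
  · intro p hp
    simp only [mem_filter, mem_univ, true_and] at hp ⊢
    obtain ⟨hg, hc⟩ := hp
    have h1 : p.1 ≠ i := by
      rintro rfl
      exact hc (hpartner _ hg).symm
    have h2 : p.2 ≠ i := by
      rintro rfl
      exact hc (hpartner _ (Nat.gcd_comm (a p.1) _ ▸ hg))
    simp [Function.update_of_ne h1, Function.update_of_ne h2, hg, hc]
  · simp [hj, hji, hpartner j hj, ht]
  · simp [hpartner j hj]

/-- In a colouring with maximal cut, `a i` cannot be the product of its gcds with the other
weights of its colour class: all its partners would then share its colour and `a i` would divide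
every degree, so recolouring `i` would enlarge the cut. -/
theorem gcdProd_ne_of_forall_cutSize_le [Nontrivial κ] {d : κ → ℕ} {c : ι → κ}
    (h1 : TripleCoprime a)
    (h3 : ∀ i j, i ≠ j → 1 < Nat.gcd (a i) (a j) → ∀ k, Nat.gcd (a i) (a j) ∣ d k)
    (hc : IsAdmissibleColoring a d c)
    (hmax : ∀ c', IsAdmissibleColoring a d c' → cutSize a c' ≤ cutSize a c) {i : ι}
    (hi : 1 < a i) : gcdProd a {j | 1 < a j ∧ c j = c i} i ≠ a i := by
  set T : Finset ι := {j | 1 < a j ∧ c j = c i}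
  intro hv
  have hpos : ∀ k, 0 < Nat.gcd (a i) (a k) := fun k => Nat.gcd_pos_of_pos_left _ (by omega)
  have hpartner : ∀ k, 1 < Nat.gcd (a i) (a k) → c k = c i := by
    intro k hk
    by_cases hki : k = i
    · rw [hki]
    have hkT : k ∈ T.erase i := by
      by_contra hkT
      have hcop := h1.coprime_gcd_prod (Ne.symm hki) (notMem_erase i T) hkT
      rw [← gcdProd, hv] at hcop
      have := hcop.eq_one_of_dvd (Nat.gcd_dvd_left _ _)
      omega
    exact (mem_filter.mp (mem_of_mem_erase hkT)).2.2
  obtain ⟨j, hj, hgj⟩ : ∃ j ∈ T.erase i, Nat.gcd (a i) (a j) ≠ 1 :=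
    exists_ne_one_of_prod_ne_one (by rw [← gcdProd, hv]; omega)
  have hdvd : ∀ t, a i ∣ d t := by
    intro t
    rw [← hv]
    refine h1.prod_gcd_dvd (notMem_erase i T) fun k hk => ?_
    obtain hg | hg := eq_or_ne (Nat.gcd (a i) (a k)) 1
    · rw [hg]
      exact one_dvd _
    · exact h3 i k (ne_of_mem_erase hk).symm (by have := hpos k; omega) t
  obtain ⟨t, ht⟩ := exists_ne (c i)
  have hadm : IsAdmissibleColoring a d (Function.update c i t) := by
    intro k hk
    by_cases hki : k = i
    · subst hki
      simpa using hdvd t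
    · simpa [Function.update_of_ne hki] using hc k hk
  exact (hmax _ hadm).not_gt
    (cutSize_lt_cutSize_update ht (ne_of_mem_erase hj) (by have := hpos j; omega) hpartner)

theorem exists_isAdmissibleColoring_forall_cutSize_le [Fintype κ] [Nonempty κ] {d : κ → ℕ}
    (h2 : ∀ i, 1 < a i → ∃ k, a i ∣ d k) :
    ∃ c, IsAdmissibleColoring a d c ∧
      ∀ c', IsAdmissibleColoring a d c' → cutSize a c' ≤ cutSize a c := by
  classical
  have hex : ∀ i, ∃ k, 1 < a i → a i ∣ d k := by
    intro i
    by_cases hi : 1 < a i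
    · exact (h2 i hi).imp fun _ h _ => h
    · exact ⟨Classical.arbitrary κ, fun h => absurd h hi⟩
  choose c₀ hc₀ using hex
  obtain ⟨c, hc, hmax⟩ := exists_max_image {c | IsAdmissibleColoring a d c} (cutSize a)
    ⟨c₀, mem_filter.mpr ⟨mem_univ _, hc₀⟩⟩
  exact ⟨c, (mem_filter.mp hc).2, fun c' hc' => hmax c' (mem_filter.mpr ⟨mem_univ _, hc'⟩)⟩

theorem sum_filter_one_lt_le_sum [Fintype κ] [Nontrivial κ] {d : κ → ℕ} (hd : ∀ k, 0 < d k)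
    (h1 : TripleCoprime a) (h2 : ∀ i, 1 < a i → ∃ k, a i ∣ d k)
    (h3 : ∀ i j, i ≠ j → 1 < Nat.gcd (a i) (a j) → ∀ k, Nat.gcd (a i) (a j) ∣ d k) :
    ∑ i with 1 < a i, a i ≤ ∑ k, d k := by
  obtain ⟨c, hc, hmax⟩ := exists_isAdmissibleColoring_forall_cutSize_le h2
  rw [← sum_fiberwise _ c a]
  refine sum_le_sum fun k _ => ?_
  rw [filter_filter]
  refine sum_le_of_forall_mul_gcdProd_dvd (hd k) (fun i hi => ?_) fun i hi => ?_ <;>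
    obtain ⟨-, hai, rfl⟩ := mem_filter.mp hi
  · exact hc i hai
  · exact Nat.exists_two_le_mul_dvd_of_dvd_of_ne (by omega) (h1.gcdProd_dvd _ i)
      (gcdProd_ne_of_forall_cutSize_le h1 h3 hc hmax hai)

end Coloring

theorem sum_eq_card_filter_eq_one_add_sum_filter_one_lt {a : ι → ℕ} (ha : ∀ i, 0 < a i)
    (s : Finset ι) : ∑ i ∈ s, a i = #{i ∈ s | a i = 1} + ∑ i ∈ s with 1 < a i, a i := by
  rw [← sum_filter_add_sum_filter_not s (fun i => a i = 1), card_eq_sum_ones]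
  congr 1
  · exact sum_congr rfl fun i hi => (mem_filter.mp hi).2
  · exact sum_congr (filter_congr fun i _ => by have := ha i; omega) fun _ _ => rfl

theorem stmt12_general (n : ℕ) (a : Fin (n + 1) → ℕ) (d₁ d₂ : ℕ)
    (hapos : ∀ i, 0 < a i) (hd₁ : 0 < d₁) (hd₂ : 0 < d₂)
    (h1 : ∀ i j k : Fin (n + 1), i ≠ j → i ≠ k → j ≠ k →
      Nat.gcd (Nat.gcd (a i) (a j)) (a k) = 1)
    (h2 : ∀ i, 1 < a i → a i ∣ d₁ ∨ a i ∣ d₂)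
    (h3 : ∀ i j : Fin (n + 1), i ≠ j → 1 < Nat.gcd (a i) (a j) →
      Nat.gcd (a i) (a j) ∣ d₁ ∧ Nat.gcd (a i) (a j) ∣ d₂) :
    (∑ i, a i) - d₁ - d₂ ≤ (Finset.univ.filter (fun i => a i = 1)).card := by
  have hsplit := sum_eq_card_filter_eq_one_add_sum_filter_one_lt hapos univ
  have hbound : ∑ i with 1 < a i, a i ≤ ∑ k : Bool, cond k d₁ d₂ :=
    sum_filter_one_lt_le_sum (by simp [hd₁, hd₂]) h1
      (fun i hi => (h2 i hi).elim (⟨true, ·⟩) (⟨false, ·⟩))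
      fun i j hij hg k => by cases k <;> simp [h3 i j hij hg]
  rw [Fintype.sum_bool, cond_true, cond_false] at hbound
  omega

/-- under the hypotheses of the main theorem, the number of unit
weights among `a₀, …, aₙ` is at least `Σ aᵢ − d₁ − d₂` (the Fano index). -/
theorem stmt12 (n : ℕ) (a : Fin (n + 1) → ℕ) (d₁ d₂ : ℕ)
    (hapos : ∀ i, 0 < a i) (hd₁ : 0 < d₁) (hd₂ : 0 < d₂)
    (h1 : ∀ i j k : Fin (n + 1), i ≠ j → i ≠ k → j ≠ k →
      Nat.gcd (Nat.gcd (a i) (a j)) (a k) = 1)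
    (h2 : ∀ i, 1 < a i → a i ∣ d₁ ∨ a i ∣ d₂)
    (h3 : ∀ i j : Fin (n + 1), i ≠ j → 1 < Nat.gcd (a i) (a j) →
      Nat.gcd (a i) (a j) ∣ d₁ ∧ Nat.gcd (a i) (a j) ∣ d₂)
    (h4 : d₁ + d₂ < ∑ i, a i) :
    (∑ i, a i) - d₁ - d₂ ≤ (Finset.univ.filter (fun i => a i = 1)).card :=
  stmt12_general n a d₁ d₂ hapos hd₁ hd₂ h1 h2 h3
end

section
/- Let α : V → ℕ be a WP-weight system on a finite set V, and suppose v₁, v₂, v₃ ∈ V are three distinct vertices with α(v₁) = 6, α(v₂) = 10, α(v₃) = 15. Then for every vertex w ∈ V \ {v₁, v₂, v₃}, the weight α(w) is coprime to each of 6, 10, and 15 (equivalently, gcd(α(w), 30) = 1); in particular the three vertices v₁, v₂, v₃ form a connected component of the associated coprimality graph, and no other triple of distinct vertices of V has multiset of weights {6, 10, 15}. -/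
theorem SimpleGraph.connectedComponentMk_supp_subset_of_adj_closed {V : Type*} {G : SimpleGraph V}
    {s : Set V} (hs : ∀ a ∈ s, ∀ b, G.Adj a b → b ∈ s) {u : V} (hu : u ∈ s) :
    (G.connectedComponentMk u).supp ⊆ s := by
  intro v hv
  obtain ⟨p⟩ := (SimpleGraph.ConnectedComponent.eq.mp hv).symm
  clear hv
  induction p with
  | nil => exact hu
  | cons hadj _ ih => exact ih (hs _ hu _ hadj)

section

variable {V : Type} {α : V → ℕ}

theorem coprimeGraph_not_adj_of_coprime {a b : V} (h : Nat.Coprime (α a) (α b)) :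
    ¬(coprimeGraph α).Adj a b :=
  fun hadj => hadj.2.ne' h

theorem WPSystem.coprime_gcd (hWP : WPSystem α) {a b w : V} (hab : a ≠ b) (hwa : w ≠ a)
    (hwb : w ≠ b) : Nat.Coprime (α w) (Nat.gcd (α a) (α b)) := by
  rw [Nat.Coprime, ← Nat.gcd_assoc]
  exact hWP.2 w a b hwa hwb hab

variable {v₁ v₂ v₃ : V}

theorem WPSystem.coprime_thirty_of_weights_6_10_15 (hWP : WPSystem α)
    (h12 : v₁ ≠ v₂) (h13 : v₁ ≠ v₃) (h23 : v₂ ≠ v₃)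
    (ha1 : α v₁ = 6) (ha2 : α v₂ = 10) (ha3 : α v₃ = 15)
    {w : V} (hw1 : w ≠ v₁) (hw2 : w ≠ v₂) (hw3 : w ≠ v₃) : Nat.Coprime (α w) 30 := by
  have h2 := hWP.coprime_gcd h12 hw1 hw2
  have h3 := hWP.coprime_gcd h13 hw1 hw3
  have h5 := hWP.coprime_gcd h23 hw2 hw3
  rw [ha1, ha2] at h2
  rw [ha1, ha3] at h3
  rw [ha2, ha3] at h5
  exact (h2.mul_right h3).mul_right h5

theorem WPSystem.mem_of_not_coprime_thirty_of_weights_6_10_15 (hWP : WPSystem α)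
    (h12 : v₁ ≠ v₂) (h13 : v₁ ≠ v₃) (h23 : v₂ ≠ v₃)
    (ha1 : α v₁ = 6) (ha2 : α v₂ = 10) (ha3 : α v₃ = 15)
    {w : V} (hw : ¬Nat.Coprime (α w) 30) : w ∈ ({v₁, v₂, v₃} : Set V) := by
  by_contra hv
  simp only [Set.mem_insert_iff, Set.mem_singleton_iff, not_or] at hv
  exact hw (hWP.coprime_thirty_of_weights_6_10_15 h12 h13 h23 ha1 ha2 ha3 hv.1 hv.2.1 hv.2.2)

theorem WPSystem.connectedComponentMk_supp_of_weights_6_10_15 (hWP : WPSystem α)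
    (h12 : v₁ ≠ v₂) (h13 : v₁ ≠ v₃) (h23 : v₂ ≠ v₃)
    (ha1 : α v₁ = 6) (ha2 : α v₂ = 10) (ha3 : α v₃ = 15) :
    ((coprimeGraph α).connectedComponentMk v₁).supp = {v₁, v₂, v₃} := by
  have hclosed : ∀ a ∈ ({v₁, v₂, v₃} : Set V), ∀ b,
      (coprimeGraph α).Adj a b → b ∈ ({v₁, v₂, v₃} : Set V) := by
    intro a ha b hab
    refine hWP.mem_of_not_coprime_thirty_of_weights_6_10_15 h12 h13 h23 ha1 ha2 ha3 fun hb => ?_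
    have ha30 : α a ∣ 30 := by
      rcases ha with rfl | rfl | rfl <;> norm_num [ha1, ha2, ha3]
    exact coprimeGraph_not_adj_of_coprime (hb.symm.coprime_dvd_left ha30) hab
  refine (SimpleGraph.connectedComponentMk_supp_subset_of_adj_closed hclosed (by simp)).antisymm ?_
  have hv₁ : v₁ ∈ ((coprimeGraph α).connectedComponentMk v₁).supp :=
    SimpleGraph.ConnectedComponent.connectedComponentMk_mem
  rintro v (rfl | rfl | rfl)
  · exact hv₁
  · exact SimpleGraph.ConnectedComponent.mem_supp_of_adj_mem_supp _ hv₁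
      ⟨h12, by norm_num [ha1, ha2]⟩
  · exact SimpleGraph.ConnectedComponent.mem_supp_of_adj_mem_supp _ hv₁
      ⟨h13, by norm_num [ha1, ha3]⟩

theorem WPSystem.triple_eq_of_weights_6_10_15 (hWP : WPSystem α)
    (h12 : v₁ ≠ v₂) (h13 : v₁ ≠ v₃) (h23 : v₂ ≠ v₃)
    (ha1 : α v₁ = 6) (ha2 : α v₂ = 10) (ha3 : α v₃ = 15)
    {w₁ w₂ w₃ : V} (hw12 : w₁ ≠ w₂) (hw13 : w₁ ≠ w₃) (hw23 : w₂ ≠ w₃)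
    (hweights : ({α w₁, α w₂, α w₃} : Multiset ℕ) = {6, 10, 15}) :
    ({w₁, w₂, w₃} : Set V) = {v₁, v₂, v₃} := by
  have hsub : ({w₁, w₂, w₃} : Set V) ⊆ {v₁, v₂, v₃} := by
    intro w hw
    have hαw : α w ∈ ({6, 10, 15} : Multiset ℕ) := by
      rw [← hweights]
      rcases hw with rfl | rfl | rfl <;> simp
    refine hWP.mem_of_not_coprime_thirty_of_weights_6_10_15 h12 h13 h23 ha1 ha2 ha3 ?_
    simp only [Multiset.insert_eq_cons, Multiset.mem_cons, Multiset.mem_singleton] at hαw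
    rcases hαw with h | h | h <;> norm_num [h]
  refine Set.eq_of_subset_of_ncard_le hsub ?_ (Set.toFinite _)
  rw [Set.ncard_eq_three.mpr ⟨_, _, _, h12, h13, h23, rfl⟩,
    Set.ncard_eq_three.mpr ⟨_, _, _, hw12, hw13, hw23, rfl⟩]

end

theorem stmt16_general {V : Type} (α : V → ℕ)
    (hWP : WPSystem α) (v₁ v₂ v₃ : V)
    (h12 : v₁ ≠ v₂) (h13 : v₁ ≠ v₃) (h23 : v₂ ≠ v₃)
    (ha1 : α v₁ = 6) (ha2 : α v₂ = 10) (ha3 : α v₃ = 15) :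
    (∀ w : V, w ≠ v₁ → w ≠ v₂ → w ≠ v₃ → Nat.Coprime (α w) 30) ∧
    ((coprimeGraph α).connectedComponentMk v₁).supp = {v₁, v₂, v₃} ∧
    (∀ w₁ w₂ w₃ : V, w₁ ≠ w₂ → w₁ ≠ w₃ → w₂ ≠ w₃ →
      ({α w₁, α w₂, α w₃} : Multiset ℕ) = ({6, 10, 15} : Multiset ℕ) →
      ({w₁, w₂, w₃} : Set V) = {v₁, v₂, v₃}) :=
  ⟨fun _ => hWP.coprime_thirty_of_weights_6_10_15 h12 h13 h23 ha1 ha2 ha3,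
    hWP.connectedComponentMk_supp_of_weights_6_10_15 h12 h13 h23 ha1 ha2 ha3,
    fun _ _ _ => hWP.triple_eq_of_weights_6_10_15 h12 h13 h23 ha1 ha2 ha3⟩

/-- if a WP-weight system has three distinct vertices of weights
`6`, `10`, `15`, then every other weight is coprime to `30`; in particular, the
three vertices form a connected component of the coprimality graph, and no
other triple of distinct vertices has multiset of weights `{6, 10, 15}`. -/
theorem stmt16 {V : Type} [Fintype V] [DecidableEq V] (α : V → ℕ)
    (hWP : WPSystem α) (v₁ v₂ v₃ : V)
    (h12 : v₁ ≠ v₂) (h13 : v₁ ≠ v₃) (h23 : v₂ ≠ v₃)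
    (ha1 : α v₁ = 6) (ha2 : α v₂ = 10) (ha3 : α v₃ = 15) :
    (∀ w : V, w ≠ v₁ → w ≠ v₂ → w ≠ v₃ → Nat.Coprime (α w) 30) ∧
    ((coprimeGraph α).connectedComponentMk v₁).supp = {v₁, v₂, v₃} ∧
    (∀ w₁ w₂ w₃ : V, w₁ ≠ w₂ → w₁ ≠ w₃ → w₂ ≠ w₃ →
      ({α w₁, α w₂, α w₃} : Multiset ℕ) = ({6, 10, 15} : Multiset ℕ) →
      ({w₁, w₂, w₃} : Set V) = {v₁, v₂, v₃}) :=
  stmt16_general α hWP v₁ v₂ v₃ h12 h13 h23 ha1 ha2 ha3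
end
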